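/- arXiv:1810.03395 — 2 statements merged into one kernel-verified Lean document; each statement's English description precedes it below -/
import Mathlib

section
/- Let (E, λ) be an M-labeled event structure over a trace alphabet M = (Σ, I). Let H' and H be hyperplanes of G(E), and let u (respectively v) be the vertex of G(E) such that the interval I(v0,u) (respectively I(v0,v)) is prime and its unique edge incident to u (respectively v) is dual to H' (respectively H). Say that H' ≤ H if H' = H, or H' separates v0 from H, meaning: for every edge xy dual to H' with d(v0,x) < d(v0,y), every endpoint w of every edge dual to H satisfies d(w,y) < d(w,x). Then H' ≤ H if and only if ⟨σ_u⟩ ⊑ ⟨σ_v⟩. -/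
/-- An event structure: a set of events with a causal partial order and a
conflict relation that is irreflexive, symmetric and hereditary, such that
every event has finitely many causes. -/
structure EventStructure (E : Type*) where
  le : E → E → Prop
  conflict : E → E → Prop
  le_refl : ∀ e, le e e
  le_trans : ∀ e₁ e₂ e₃, le e₁ e₂ → le e₂ e₃ → le e₁ e₃
  le_antisymm : ∀ e₁ e₂, le e₁ e₂ → le e₂ e₁ → e₁ = e₂
  conflict_irrefl : ∀ e, ¬ conflict e e
  conflict_symm : ∀ e₁ e₂, conflict e₁ e₂ → conflict e₂ e₁
  conflict_le : ∀ e₁ e₂ e₃, conflict e₁ e₂ → le e₂ e₃ → conflict e₁ e₃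
  finite_cause : ∀ e, Set.Finite {e' | le e' e}

namespace EventStructure

variable {E : Type*} (ES : EventStructure E)

/-- A configuration: a finite, downward-closed, conflict-free set of events. -/
abbrev IsConfig (c : Finset E) : Prop :=
  (∀ e ∈ c, ∀ e', ES.le e' e → e' ∈ c) ∧ ∀ e ∈ c, ∀ e' ∈ c, ¬ ES.conflict e e'

/-- The type of configurations of an event structure. -/
abbrev Config : Type _ := {c : Finset E // ES.IsConfig c}

/-- `c'` is obtained from the configuration `c` by adding the single event `e`. -/
abbrev Extends (c c' : ES.Config) (e : E) : Prop :=
  e ∉ c.1 ∧ ∀ x, x ∈ c'.1 ↔ x = e ∨ x ∈ c.1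

/-- `c'` is obtained from the configuration `c` by adding a single event. -/
abbrev Covers (c c' : ES.Config) : Prop := ∃ e, ES.Extends c c' e

/-- The (undirected) graph `G(E)` of the domain of an event structure:
vertices are configurations, edges join configurations differing in one event. -/
def configGraph : SimpleGraph ES.Config where
  Adj c c' := ES.Covers c c' ∨ ES.Covers c' c
  symm := ⟨fun c c' h => Or.symm h⟩
  loopless := by
    constructor
    intro c h
    have key : ¬ ES.Covers c c := by
      rintro ⟨e, he, hmem⟩
      exact he ((hmem e).mpr (Or.inl rfl))
    exact h.elim key key

/-- The empty configuration, i.e. the basepoint `v₀` of the domain. -/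
def emptyConfig : ES.Config :=
  ⟨∅, fun e he => absurd he (Finset.notMem_empty e),
      fun e he => absurd he (Finset.notMem_empty e)⟩

/-- Minimal conflict `e #_μ e'`. -/
abbrev MinConflict (e e' : E) : Prop :=
  ES.conflict e e' ∧ ¬ ∃ e'', e'' ≠ e ∧ e'' ≠ e' ∧
    ((ES.le e'' e ∧ ES.conflict e'' e') ∨ (ES.le e'' e' ∧ ES.conflict e'' e))

/-- `e` is an immediate predecessor of `e'`. -/
abbrev ImmPred (e e' : E) : Prop :=
  ES.le e e' ∧ e ≠ e' ∧ ∀ e'', ES.le e e'' → ES.le e'' e' → e'' = e ∨ e'' = e'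

/-- Two events are concurrent: order-incomparable and not in conflict. -/
abbrev Concurrent (e e' : E) : Prop :=
  ¬ ES.le e e' ∧ ¬ ES.le e' e ∧ ¬ ES.conflict e e'

/-- An event `e` is enabled at a configuration `c`. -/
abbrev Enabled (c : ES.Config) (e : E) : Prop := ∃ c' : ES.Config, ES.Extends c c' e

end EventStructure

/-- The metric interval `I(u,v)` between two vertices of a graph. -/
abbrev mInterval {V : Type*} (G : SimpleGraph V) (u v : V) : Set V :=
  {x | G.dist u x + G.dist x v = G.dist u v}

open Classical in
/-- The label of the edge between two configurations (label of the unique event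
in their symmetric difference). -/
noncomputable def stepLabel {E A : Type*} [Nonempty A] (lab : E → A)
    (c c' : Finset E) : A :=
  if h : ∃ e, (e ∈ c' ∧ e ∉ c) ∨ (e ∈ c ∧ e ∉ c') then lab h.choose
  else Classical.arbitrary A

/-- The word `σ(π)` of labels read along a walk of the domain graph. -/
noncomputable def walkWord {E A : Type*} [Nonempty A] {ES : EventStructure E}
    (lab : E → A) {c c' : ES.Config} (p : ES.configGraph.Walk c c') : List A :=
  p.darts.map fun d => stepLabel lab d.toProd.1.1 d.toProd.2.1

/-- One elementary commutation step on words: exchange two adjacent independent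
letters. -/
inductive SwapStep {A : Type*} (I : A → A → Prop) : List A → List A → Prop
  | swap (u v : List A) (a b : A) (h : I a b) :
      SwapStep I (u ++ a :: b :: v) (u ++ b :: a :: v)

/-- Mazurkiewicz trace equivalence `~_I`: the reflexive-transitive closure of
elementary commutations. -/
abbrev TraceEquiv {A : Type*} (I : A → A → Prop) : List A → List A → Prop :=
  Relation.ReflTransGen (SwapStep I)

/-- `(ES, lab)` is an `M`-labeled event structure over the trace alphabet
`M = (A, I)` (axioms (LES1)-(LES3)). -/
structure IsTraceLabeling {E A : Type*} (ES : EventStructure E)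
    (I : A → A → Prop) (lab : E → A) : Prop where
  les1 : ∀ e e', ES.MinConflict e e' → lab e ≠ lab e'
  les2 : ∀ e e', ES.ImmPred e e' ∨ ES.MinConflict e e' → ¬ I (lab e) (lab e')
  les3 : ∀ e e', ¬ I (lab e) (lab e') → ES.le e e' ∨ ES.le e' e ∨ ES.conflict e e'

/-- Two edges are opposite edges of a common 4-cycle. -/
abbrev OppSquare {V : Type*} (G : SimpleGraph V) (e f : Sym2 V) : Prop :=
  ∃ a b c d : V, e = s(a, b) ∧ f = s(c, d) ∧ G.Adj a b ∧ G.Adj c d ∧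
    G.Adj a c ∧ G.Adj b d ∧ a ≠ d ∧ b ≠ c

/-- The relation `Θ`: reflexive-transitive closure of being opposite edges of a
square. -/
abbrev ThetaRel {V : Type*} (G : SimpleGraph V) : Sym2 V → Sym2 V → Prop :=
  Relation.ReflTransGen (OppSquare G)

/-- A hyperplane of a graph: an equivalence class of edges under `Θ`. -/
abbrev IsHyperplane {V : Type*} (G : SimpleGraph V) (H : Set (Sym2 V)) : Prop :=
  ∃ e ∈ G.edgeSet, H = {f | f ∈ G.edgeSet ∧ ThetaRel G e f}

/-- The interval `I(v₀,v)` is prime with unique neighbor `u` of `v` inside it,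
and the edge `uv` is dual to the hyperplane `H`. -/
abbrev PrimeVertexFor {V : Type*} (G : SimpleGraph V) (v0 : V)
    (H : Set (Sym2 V)) (v : V) : Prop :=
  ∃ u, G.Adj v u ∧ u ∈ mInterval G v0 v ∧
    (∀ u', G.Adj v u' → u' ∈ mInterval G v0 v → u' = u) ∧ s(u, v) ∈ H

/-- `T` is a geodesic trace of the labeled event structure `(ES, lab)`. -/
abbrev IsGeodesicTrace {E A : Type*} [Nonempty A] (ES : EventStructure E)
    (I : A → A → Prop) (lab : E → A) (T : Set (List A)) : Prop :=
  ∃ (v : ES.Config) (p : ES.configGraph.Walk ES.emptyConfig v),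
    p.length = ES.configGraph.dist ES.emptyConfig v ∧
    T = {w : List A | TraceEquiv I (walkWord lab p) w}

/-- A trace is prime: all of its words are nonempty with a common last letter. -/
abbrev IsPrimeTrace {A : Type*} (T : Set (List A)) : Prop :=
  ∀ w ∈ T, w ≠ [] ∧ ∀ w' ∈ T, w'.getLast? = w.getLast?

/-- `H' ≤ H` for hyperplanes: `H' = H`, or `H'` separates `v₀` from `H`. -/
abbrev HypLe {V : Type*} (G : SimpleGraph V) (v0 : V)
    (H' H : Set (Sym2 V)) : Prop :=
  H' = H ∨ ∀ x y, s(x, y) ∈ H' → G.dist v0 x < G.dist v0 y →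
    ∀ w z, s(w, z) ∈ H → G.dist w y < G.dist w x

namespace EventStructure

set_option linter.unusedSectionVars false

open scoped symmDiff

variable {E : Type*} [DecidableEq E] {ES : EventStructure E}

/-- Measure: number of causes of an event. -/
noncomputable def mu (ES : EventStructure E) (e : E) : ℕ :=
  (ES.finite_cause e).toFinset.card

lemma mu_lt_mu {a b : E} (hab : ES.le a b) (hne : a ≠ b) : ES.mu a < ES.mu b := by
  apply Finset.card_lt_card
  constructor
  · intro x hx
    simp only [Set.Finite.mem_toFinset, Set.mem_setOf_eq] at hx ⊢
    exact ES.le_trans _ _ _ hx hab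
  · intro hsub
    have hb : b ∈ (ES.finite_cause b).toFinset := by
      simp [Set.Finite.mem_toFinset, ES.le_refl]
    have := hsub hb
    simp only [Set.Finite.mem_toFinset, Set.mem_setOf_eq] at this
    exact hne (ES.le_antisymm _ _ hab this)

lemma exists_maximal {s : Finset E} (hs : s.Nonempty) (ES : EventStructure E) :
    ∃ m ∈ s, ∀ b ∈ s, ES.le m b → m = b := by
  obtain ⟨m, hm, hmax⟩ := s.exists_max_image ES.mu hs
  refine ⟨m, hm, fun b hb hle => ?_⟩
  by_contra hne
  exact absurd (hmax b hb) (not_le.mpr (mu_lt_mu hle hne))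

lemma exists_minimal {s : Finset E} (hs : s.Nonempty) (ES : EventStructure E) :
    ∃ m ∈ s, ∀ b ∈ s, ES.le b m → b = m := by
  obtain ⟨m, hm, hmin⟩ := s.exists_min_image ES.mu hs
  refine ⟨m, hm, fun b hb hle => ?_⟩
  by_contra hne
  exact absurd (hmin b hb) (not_le.mpr (mu_lt_mu hle hne))

lemma Extends.eq_insert {c c' : ES.Config} {e : E} (h : ES.Extends c c' e) :
    c'.1 = insert e c.1 := by
  ext x; simp only [Finset.mem_insert]; exact h.2 x

lemma Extends.symmDiff_eq {c c' : ES.Config} {e : E} (h : ES.Extends c c' e) :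
    c.1 ∆ c'.1 = {e} := by
  have := h.eq_insert
  ext x
  simp only [Finset.mem_symmDiff, this, Finset.mem_insert, Finset.mem_singleton]
  constructor
  · rintro (⟨hx, hx'⟩ | ⟨hx, hx'⟩)
    · exact absurd (Or.inr hx) hx'
    · rcases hx with rfl | hx
      · rfl
      · exact absurd hx hx'
  · rintro rfl
    exact Or.inr ⟨Or.inl rfl, h.1⟩

lemma adj_symmDiff {c c' : ES.Config} (h : ES.configGraph.Adj c c') :
    ∃ e, c.1 ∆ c'.1 = {e} := by
  rcases h with ⟨e, he⟩ | ⟨e, he⟩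
  · exact ⟨e, he.symmDiff_eq⟩
  · exact ⟨e, by rw [symmDiff_comm]; exact he.symmDiff_eq⟩

lemma walk_symmDiff_le {a b : ES.Config} (p : ES.configGraph.Walk a b) :
    (a.1 ∆ b.1).card ≤ p.length := by
  induction p with
  | nil => simp
  | @cons a a₁ b h q ih =>
    obtain ⟨e, he⟩ := adj_symmDiff h
    calc (a.1 ∆ b.1).card ≤ (a.1 ∆ a₁.1 ∪ a₁.1 ∆ b.1).card :=
          Finset.card_le_card (symmDiff_triangle _ _ _)
      _ ≤ (a.1 ∆ a₁.1).card + (a₁.1 ∆ b.1).card := Finset.card_union_le _ _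
      _ ≤ 1 + q.length := by rw [he]; simp [ih]
      _ = (SimpleGraph.Walk.cons h q).length := by simp [SimpleGraph.Walk.length_cons]; omega

lemma exists_walk_length : ∀ (n : ℕ) (a b : ES.Config), (a.1 ∆ b.1).card = n →
    ∃ p : ES.configGraph.Walk a b, p.length = n := by
  intro n
  induction n with
  | zero =>
    intro a b h
    have : a.1 ∆ b.1 = ∅ := Finset.card_eq_zero.mp h
    have hab : a = b := Subtype.ext (symmDiff_eq_bot.mp (by rw [Finset.bot_eq_empty]; exact this))
    subst hab
    exact ⟨SimpleGraph.Walk.nil, rfl⟩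
  | succ n ih =>
    intro a b h
    by_cases hab : (a.1 \ b.1).Nonempty
    · -- remove a maximal element of a \ b
      obtain ⟨m, hm, hmax⟩ := exists_maximal hab ES
      simp only [Finset.mem_sdiff] at hm
      have hmaxa : ∀ x ∈ a.1, ES.le m x → m = x := by
        intro x hx hle
        by_cases hxb : x ∈ b.1
        · exact absurd (b.2.1 x hxb m hle) hm.2
        · exact hmax x (Finset.mem_sdiff.mpr ⟨hx, hxb⟩) hle
      have ha' : ES.IsConfig (a.1.erase m) := by
        constructor
        · intro x hx z hz
          rw [Finset.mem_erase] at hx ⊢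
          refine ⟨fun hzm => ?_, a.2.1 x hx.2 z hz⟩
          subst hzm
          exact hx.1 (hmaxa x hx.2 hz).symm
        · intro x hx y hy
          exact a.2.2 x (Finset.mem_of_mem_erase hx) y (Finset.mem_of_mem_erase hy)
      set a' : ES.Config := ⟨a.1.erase m, ha'⟩ with ha'def
      have hcov : ES.Covers a' a := by
        refine ⟨m, Finset.notMem_erase m a.1, fun x => ?_⟩
        simp only [ha'def, Finset.mem_erase]
        constructor
        · intro hx
          by_cases hxm : x = m
          · exact Or.inl hxm
          · exact Or.inr ⟨hxm, hx⟩
        · rintro (rfl | ⟨_, hx⟩) <;> [exact hm.1; exact hx]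
      have hdiff : (a'.1 ∆ b.1).card = n := by
        have : a'.1 ∆ b.1 = (a.1 ∆ b.1).erase m := by
          ext x
          simp only [ha'def, Finset.mem_symmDiff, Finset.mem_erase]
          constructor
          · rintro (⟨⟨hxm, hx⟩, hxb⟩ | ⟨hxb, hx⟩)
            · exact ⟨hxm, Or.inl ⟨hx, hxb⟩⟩
            · refine ⟨fun hxm => ?_, Or.inr ⟨hxb, fun hxa => hx ⟨?_, hxa⟩⟩⟩
              · subst hxm; exact hm.2 hxb
              · rintro rfl; exact hm.2 hxb
          · rintro ⟨hxm, ⟨hx, hxb⟩ | ⟨hxb, hxa⟩⟩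
            · exact Or.inl ⟨⟨hxm, hx⟩, hxb⟩
            · exact Or.inr ⟨hxb, fun h' => hxa h'.2⟩
        rw [this, Finset.card_erase_of_mem, h]
        · rfl
        · exact Finset.mem_symmDiff.mpr (Or.inl ⟨hm.1, hm.2⟩)
      obtain ⟨q, hq⟩ := ih a' b hdiff
      exact ⟨SimpleGraph.Walk.cons (show ES.configGraph.Adj a a' from Or.inr hcov) q, by simp [hq]⟩
    · -- a ⊆ b; add a minimal element of b \ a
      have hsub : a.1 ⊆ b.1 := by
        intro x hx
        by_contra hxb
        exact hab ⟨x, Finset.mem_sdiff.mpr ⟨hx, hxb⟩⟩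
      have hba : (b.1 \ a.1).Nonempty := by
        rcases Finset.card_pos.mp (by omega : 0 < (a.1 ∆ b.1).card) with ⟨x, hx⟩
        rw [Finset.mem_symmDiff] at hx
        rcases hx with ⟨hx, hxb⟩ | ⟨hx, hxa⟩
        · exact absurd (hsub hx) hxb
        · exact ⟨x, Finset.mem_sdiff.mpr ⟨hx, hxa⟩⟩
      obtain ⟨m, hm, hmin⟩ := exists_minimal hba ES
      simp only [Finset.mem_sdiff] at hm
      have ha₁ : ES.IsConfig (insert m a.1) := by
        constructor
        · intro x hx z hz
          rw [Finset.mem_insert] at hx ⊢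
          rcases hx with rfl | hx
          · by_cases hza : z ∈ a.1
            · exact Or.inr hza
            · exact Or.inl ((hmin z (Finset.mem_sdiff.mpr ⟨b.2.1 x hm.1 z hz, hza⟩) hz))
          · exact Or.inr (a.2.1 x hx z hz)
        · intro x hx y hy
          have hxb : x ∈ b.1 := by
            rcases Finset.mem_insert.mp hx with rfl | hx
            · exact hm.1
            · exact hsub hx
          have hyb : y ∈ b.1 := by
            rcases Finset.mem_insert.mp hy with rfl | hy
            · exact hm.1
            · exact hsub hy
          exact b.2.2 x hxb y hyb
      set a₁ : ES.Config := ⟨insert m a.1, ha₁⟩ with ha₁def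
      have hcov : ES.Covers a a₁ := ⟨m, hm.2, fun x => by simp [ha₁def]⟩
      have hdiff : (a₁.1 ∆ b.1).card = n := by
        have : a₁.1 ∆ b.1 = (a.1 ∆ b.1).erase m := by
          ext x
          simp only [ha₁def, Finset.mem_symmDiff, Finset.mem_erase, Finset.mem_insert]
          constructor
          · rintro (⟨hx, hxb⟩ | ⟨hxb, hx⟩)
            · rcases hx with rfl | hx
              · exact absurd hm.1 hxb
              · exact absurd (hsub hx) hxb
            · push_neg at hx
              exact ⟨hx.1, Or.inr ⟨hxb, hx.2⟩⟩
          · rintro ⟨hxm, ⟨hx, hxb⟩ | ⟨hxb, hxa⟩⟩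
            · exact absurd (hsub hx) hxb
            · exact Or.inr ⟨hxb, by push_neg; exact ⟨hxm, hxa⟩⟩
        rw [this, Finset.card_erase_of_mem, h]
        · rfl
        · exact Finset.mem_symmDiff.mpr (Or.inr ⟨hm.1, hm.2⟩)
      obtain ⟨q, hq⟩ := ih a₁ b hdiff
      exact ⟨SimpleGraph.Walk.cons (show ES.configGraph.Adj a a₁ from Or.inl hcov) q, by simp [hq]⟩

lemma config_dist_eq (a b : ES.Config) :
    ES.configGraph.dist a b = (a.1 ∆ b.1).card := by
  obtain ⟨p, hp⟩ := exists_walk_length _ a b rfl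
  refine Nat.le_antisymm (Nat.le_trans (SimpleGraph.dist_le p) (Nat.le_of_eq hp)) ?_
  have hr : ES.configGraph.Reachable a b := ⟨p⟩
  obtain ⟨q, hq⟩ := hr.exists_walk_length_eq_dist
  rw [← hq]
  exact walk_symmDiff_le q

end EventStructure
namespace EventStructure

set_option linter.unusedSectionVars false
open scoped symmDiff

variable {E : Type*} [DecidableEq E] {ES : EventStructure E}

/-- The edge `g` of the configuration graph adds the event `e`. -/
def AddsE (ES : EventStructure E) (g : Sym2 ES.Config) (e : E) : Prop :=
  ∃ a b : ES.Config, g = s(a, b) ∧ ES.Extends a b e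

lemma AddsE.symmDiff {g : Sym2 ES.Config} {e : E} (h : ES.AddsE g e)
    {a b : ES.Config} (hg : g = s(a, b)) : a.1 ∆ b.1 = {e} := by
  obtain ⟨a', b', rfl, hext⟩ := h
  rw [Sym2.eq_iff] at hg
  rcases hg with ⟨rfl, rfl⟩ | ⟨rfl, rfl⟩
  · exact hext.symmDiff_eq
  · rw [symmDiff_comm]; exact hext.symmDiff_eq

lemma AddsE.unique {g : Sym2 ES.Config} {e e' : E}
    (h : ES.AddsE g e) (h' : ES.AddsE g e') : e = e' := by
  obtain ⟨a, b, rfl, hext⟩ := h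
  have h1 := h'.symmDiff (rfl : s(a,b) = s(a,b))
  have h2 := hext.symmDiff_eq
  rw [h2] at h1
  exact Finset.singleton_injective h1

lemma addsE_of_adj {a b : ES.Config} (h : ES.configGraph.Adj a b) :
    ∃ e, ES.AddsE s(a, b) e := by
  rcases h with ⟨e, he⟩ | ⟨e, he⟩
  · exact ⟨e, a, b, rfl, he⟩
  · exact ⟨e, b, a, Sym2.eq_swap, he⟩

lemma addsE_of_symmDiff {a b : ES.Config} (h : ES.configGraph.Adj a b)
    {e : E} (hd : a.1 ∆ b.1 = {e}) : ES.AddsE s(a, b) e := by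
  obtain ⟨e', he'⟩ := addsE_of_adj h
  have := he'.symmDiff (rfl : s(a,b) = s(a,b))
  rw [hd] at this
  have he : e' = e := (Finset.singleton_injective this).symm
  rwa [he] at he'

lemma singleton_symmDiff {e q : E} (h : e ≠ q) : ({e} : Finset E) ∆ {q} = {e, q} := by
  ext x
  simp only [Finset.mem_symmDiff, Finset.mem_singleton, Finset.mem_insert]
  constructor
  · rintro (⟨rfl, _⟩ | ⟨rfl, _⟩) <;> simp
  · rintro (rfl | rfl)
    · exact Or.inl ⟨rfl, h⟩
    · exact Or.inr ⟨rfl, fun hh => h hh.symm⟩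

lemma oppSquare_addsE {g f : Sym2 ES.Config} {e : E}
    (hsq : OppSquare ES.configGraph g f) (hg : ES.AddsE g e) : ES.AddsE f e := by
  obtain ⟨a, b, c, d, rfl, rfl, hab, hcd, hac, hbd, had, hbc⟩ := hsq
  have habd : a.1 ∆ b.1 = {e} := hg.symmDiff rfl
  obtain ⟨q, hq⟩ := adj_symmDiff hbd
  obtain ⟨r, hr⟩ := adj_symmDiff hac
  obtain ⟨s₀, hs₀⟩ := adj_symmDiff hcd
  have key : ∀ x y z : ES.Config, (x.1 ∆ y.1) ∆ (y.1 ∆ z.1) = x.1 ∆ z.1 := by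
    intro x y z
    rw [symmDiff_assoc, symmDiff_symmDiff_cancel_left]
  have h1 : ({e} : Finset E) ∆ {q} = {r} ∆ {s₀} := by
    rw [← habd, ← hq, ← hr, ← hs₀, key, key]
  have hadne : a.1 ∆ d.1 ≠ ∅ := by
    intro hh
    exact had (Subtype.ext (symmDiff_eq_bot.mp (by rw [Finset.bot_eq_empty]; exact hh)))
  have hadval : a.1 ∆ d.1 = ({e} : Finset E) ∆ {q} := by rw [← habd, ← hq, key]
  have heq : e ≠ q := by
    rintro rfl
    exact hadne (by rw [hadval, symmDiff_self, Finset.bot_eq_empty])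
  have hrs : r ≠ s₀ := by
    rintro rfl
    apply hadne
    rw [hadval, h1, symmDiff_self, Finset.bot_eq_empty]
  have hbcne : b.1 ∆ c.1 ≠ ∅ := by
    intro hh
    exact hbc (Subtype.ext (symmDiff_eq_bot.mp (by rw [Finset.bot_eq_empty]; exact hh)))
  have hbcval : b.1 ∆ c.1 = ({e} : Finset E) ∆ {r} := by
    rw [← habd, ← hr, symmDiff_comm a.1 b.1, key]
  have her : e ≠ r := by
    rintro rfl
    exact hbcne (by rw [hbcval, symmDiff_self, Finset.bot_eq_empty])
  have hes : e = s₀ := by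
    rw [singleton_symmDiff heq, singleton_symmDiff hrs] at h1
    have he2 : e ∈ ({r, s₀} : Finset E) := by rw [← h1]; simp
    rcases Finset.mem_insert.mp he2 with h' | h'
    · exact absurd h' her
    · exact Finset.mem_singleton.mp h'
  exact addsE_of_symmDiff hcd (by rw [hs₀, hes])

lemma oppSquare_symm {V : Type*} {G : SimpleGraph V} {g f : Sym2 V}
    (h : OppSquare G g f) : OppSquare G f g := by
  obtain ⟨a, b, c, d, rfl, rfl, hab, hcd, hac, hbd, had, hbc⟩ := h
  exact ⟨c, d, a, b, rfl, rfl, hcd, hab, hac.symm, hbd.symm, fun h => hbc h.symm,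
    fun h => had h.symm⟩

lemma thetaRel_symm {V : Type*} {G : SimpleGraph V} {g f : Sym2 V}
    (h : ThetaRel G g f) : ThetaRel G f g :=
  by
    induction h with
    | refl => exact Relation.ReflTransGen.refl
    | tail _ h2 ih => exact Relation.ReflTransGen.head (oppSquare_symm h2) ih

/-- The set of causes of an event, as a finset. -/
noncomputable def downC (ES : EventStructure E) (e : E) : Finset E :=
  (ES.finite_cause e).toFinset

lemma mem_downC {e x : E} : x ∈ ES.downC e ↔ ES.le x e := by
  simp [downC, Set.Finite.mem_toFinset]

lemma downC_isConfig (e : E) : ES.IsConfig (ES.downC e) := by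
  constructor
  · intro x hx z hz
    rw [mem_downC] at hx ⊢
    exact ES.le_trans _ _ _ hz hx
  · intro x hx y hy hconf
    rw [mem_downC] at hx hy
    have h1 : ES.conflict x e := ES.conflict_le _ _ _ hconf hy
    have h2 : ES.conflict e e := ES.conflict_le _ _ _ (ES.conflict_symm _ _ h1) hx
    exact ES.conflict_irrefl e h2

/-- The prime configuration `⌈e⌉ = ↓e`. -/
noncomputable def primeC (ES : EventStructure E) (e : E) : ES.Config :=
  ⟨ES.downC e, downC_isConfig e⟩

lemma primeC'_isConfig (e : E) : ES.IsConfig ((ES.downC e).erase e) := by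
  constructor
  · intro x hx z hz
    rw [Finset.mem_erase, mem_downC] at hx ⊢
    exact ⟨fun hze => hx.1 (ES.le_antisymm _ _ hx.2 (hze ▸ hz)), ES.le_trans _ _ _ hz hx.2⟩
  · intro x hx y hy
    exact (downC_isConfig e).2 x (Finset.mem_of_mem_erase hx) y (Finset.mem_of_mem_erase hy)

/-- The configuration `⌈e⌉ \ {e}` of strict causes of `e`. -/
noncomputable def primeC' (ES : EventStructure E) (e : E) : ES.Config :=
  ⟨(ES.downC e).erase e, primeC'_isConfig e⟩

lemma extends_primeC (e : E) : ES.Extends (ES.primeC' e) (ES.primeC e) e := by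
  refine ⟨Finset.notMem_erase e _, fun x => ?_⟩
  simp only [primeC, primeC', Finset.mem_erase, mem_downC]
  constructor
  · intro hx
    by_cases hxe : x = e
    · exact Or.inl hxe
    · exact Or.inr ⟨hxe, hx⟩
  · rintro (rfl | ⟨_, hx⟩)
    · exact ES.le_refl x
    · exact hx

lemma extends_sub_base {c c₁ : ES.Config} {e : E} (h : ES.Extends c c₁ e) :
    (ES.primeC' e).1 ⊆ c.1 := by
  intro x hx
  simp only [primeC', Finset.mem_erase, mem_downC] at hx
  have hxc₁ : x ∈ c₁.1 := c₁.2.1 e ((h.2 e).mpr (Or.inl rfl)) x hx.2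
  rcases (h.2 x).mp hxc₁ with rfl | hxc
  · exact absurd rfl hx.1
  · exact hxc

end EventStructure
namespace EventStructure

set_option linter.unusedSectionVars false
open scoped symmDiff

variable {E : Type*} [DecidableEq E] {ES : EventStructure E}

lemma theta_to_base (e : E) : ∀ (n : ℕ) (c c₁ : ES.Config), ES.Extends c c₁ e →
    (c.1 \ (ES.primeC' e).1).card = n →
    ThetaRel ES.configGraph s(ES.primeC' e, ES.primeC e) s(c, c₁) := by
  intro n
  induction n with
  | zero =>
    intro c c₁ hext hcard
    have hsub : c.1 ⊆ (ES.primeC' e).1 := by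
      intro x hx
      by_contra hxb
      have : x ∈ c.1 \ (ES.primeC' e).1 := Finset.mem_sdiff.mpr ⟨hx, hxb⟩
      rw [Finset.card_eq_zero.mp hcard] at this
      exact absurd this (Finset.notMem_empty x)
    have hc : c = ES.primeC' e := Subtype.ext (Finset.Subset.antisymm hsub (extends_sub_base hext))
    subst hc
    have hc₁ : c₁ = ES.primeC e :=
      Subtype.ext (by rw [hext.eq_insert, (extends_primeC (ES := ES) e).eq_insert])
    subst hc₁
    exact Relation.ReflTransGen.refl
  | succ n ih =>
    intro c c₁ hext hcard
    have hne : (c.1 \ (ES.primeC' e).1).Nonempty := by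
      rw [← Finset.card_pos, hcard]; omega
    obtain ⟨f, hf, hfmax⟩ := exists_maximal hne ES
    rw [Finset.mem_sdiff] at hf
    have hec : e ∉ c.1 := hext.1
    have hfe : f ≠ e := fun h => hec (h ▸ hf.1)
    -- f is maximal in c
    have hfmaxc : ∀ x ∈ c.1, ES.le f x → f = x := by
      intro x hx hle
      by_cases hxb : x ∈ (ES.primeC' e).1
      · -- x < e hence f ≤ e hence f ∈ primeC', contradiction
        exfalso
        simp only [primeC', Finset.mem_erase, mem_downC] at hxb
        have hfle : ES.le f e := ES.le_trans _ _ _ hle hxb.2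
        exact hf.2 (by simp only [primeC', Finset.mem_erase, mem_downC]; exact ⟨hfe, hfle⟩)
      · exact hfmax x (Finset.mem_sdiff.mpr ⟨hx, hxb⟩) hle
    -- c' = c \ {f}
    have hc' : ES.IsConfig (c.1.erase f) := by
      constructor
      · intro x hx z hz
        rw [Finset.mem_erase] at hx ⊢
        refine ⟨fun hzf => hx.1 ?_, c.2.1 x hx.2 z hz⟩
        subst hzf
        exact (hfmaxc x hx.2 hz).symm
      · intro x hx y hy
        exact c.2.2 x (Finset.mem_of_mem_erase hx) y (Finset.mem_of_mem_erase hy)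
    set c' : ES.Config := ⟨c.1.erase f, hc'⟩ with hc'def
    have hc₁eq : c₁.1 = insert e c.1 := hext.eq_insert
    have hc₁' : ES.IsConfig (insert e c'.1) := by
      constructor
      · intro x hx z hz
        rw [Finset.mem_insert] at hx ⊢
        rcases hx with rfl | hx
        · by_cases hze : z = x
          · exact Or.inl hze
          · right
            have hzc : z ∈ c.1 := extends_sub_base hext
              (by simp only [primeC', Finset.mem_erase, mem_downC]; exact ⟨hze, hz⟩)
            rw [hc'def, Finset.mem_erase]
            refine ⟨fun hzf => ?_, hzc⟩
            subst hzf
            exact hf.2 (by simp only [primeC', Finset.mem_erase, mem_downC]; exact ⟨hfe, hz⟩)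
        · right
          rw [hc'def, Finset.mem_erase] at hx ⊢
          refine ⟨fun hzf => hx.1 ?_, c.2.1 x hx.2 z hz⟩
          subst hzf
          exact (hfmaxc x hx.2 hz).symm
      · intro x hx y hy
        have hsub : insert e c'.1 ⊆ c₁.1 := by
          intro z hz
          rw [Finset.mem_insert] at hz
          rw [hc₁eq, Finset.mem_insert]
          rcases hz with rfl | hz
          · exact Or.inl rfl
          · exact Or.inr (Finset.mem_of_mem_erase hz)
        exact c₁.2.2 x (hsub hx) y (hsub hy)
    set c₁' : ES.Config := ⟨insert e c'.1, hc₁'⟩ with hc₁'def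
    have hext' : ES.Extends c' c₁' e := by
      refine ⟨fun h => hec (Finset.mem_of_mem_erase h), fun x => ?_⟩
      simp [hc₁'def]
    have hcard' : (c'.1 \ (ES.primeC' e).1).card = n := by
      have : c'.1 \ (ES.primeC' e).1 = (c.1 \ (ES.primeC' e).1).erase f := by
        ext x
        simp only [hc'def, Finset.mem_sdiff, Finset.mem_erase]
        tauto
      rw [this, Finset.card_erase_of_mem (Finset.mem_sdiff.mpr hf), hcard]
      rfl
    have hchain := ih c' c₁' hext' hcard'
    refine hchain.tail ?_
    -- square c', c₁', c, c₁
    have hcovc : ES.Covers c' c := by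
      refine ⟨f, Finset.notMem_erase f _, fun x => ?_⟩
      simp only [hc'def, Finset.mem_erase]
      constructor
      · intro hx
        by_cases hxf : x = f
        · exact Or.inl hxf
        · exact Or.inr ⟨hxf, hx⟩
      · rintro (rfl | ⟨_, hx⟩) <;> [exact hf.1; exact hx]
    have hcovc₁ : ES.Covers c₁' c₁ := by
      refine ⟨f, ?_, fun x => ?_⟩
      · simp only [hc₁'def, Finset.mem_insert, hc'def, Finset.mem_erase]
        push_neg
        exact ⟨hfe, fun h => absurd rfl h⟩
      · simp only [hc₁'def, Finset.mem_insert, hc'def, Finset.mem_erase, hc₁eq]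
        have hfc := hf.1
        constructor
        · rintro (rfl | hx)
          · exact Or.inr (Or.inl rfl)
          · by_cases hxf : x = f
            · exact Or.inl hxf
            · exact Or.inr (Or.inr ⟨hxf, hx⟩)
        · rintro (rfl | rfl | ⟨_, hx⟩)
          · exact Or.inr hfc
          · exact Or.inl rfl
          · exact Or.inr hx
    refine ⟨c', c₁', c, c₁, rfl, rfl, Or.inl ⟨e, hext'⟩, Or.inl ⟨e, hext⟩,
      Or.inl hcovc, Or.inl hcovc₁, ?_, ?_⟩
    · -- c' ≠ c₁
      intro h
      have h1 : c'.1.card + 1 = c.1.card := by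
        simpa [hc'def] using Finset.card_erase_add_one hf.1
      have h2 : c.1.card + 1 = c₁.1.card := by
        rw [hc₁eq, Finset.card_insert_of_notMem hec]
      have h3 : c'.1.card = c₁.1.card := by rw [h]
      omega
    · -- c₁' ≠ c
      intro h
      have : e ∈ c.1 := by
        rw [← h, hc₁'def]
        exact Finset.mem_insert_self e _
      exact hec this

lemma theta_of_addsE {g f : Sym2 ES.Config} {e : E}
    (hge : ES.AddsE g e) (hfe : ES.AddsE f e) : ThetaRel ES.configGraph g f := by
  obtain ⟨a, b, rfl, hab⟩ := hge
  obtain ⟨a', b', rfl, hab'⟩ := hfe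
  exact (thetaRel_symm (theta_to_base e _ a b hab rfl)).trans
    (theta_to_base e _ a' b' hab' rfl)

lemma thetaRel_addsE {g f : Sym2 ES.Config} {e : E}
    (h : ThetaRel ES.configGraph g f) (hg : ES.AddsE g e) : ES.AddsE f e := by
  induction h with
  | refl => exact hg
  | tail _ hsq ih => exact oppSquare_addsE hsq ih

lemma oppSquare_edge {V : Type*} {G : SimpleGraph V} {g f : Sym2 V}
    (h : OppSquare G g f) : f ∈ G.edgeSet := by
  obtain ⟨a, b, c, d, rfl, rfl, hab, hcd, _, _, _, _⟩ := h
  exact hcd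

/-- Characterization of hyperplanes of the configuration graph: the class of
all edges adding a fixed event. -/
lemma hyperplane_char {H : Set (Sym2 ES.Config)}
    (hH : IsHyperplane ES.configGraph H) :
    ∃ e : E, H = {g | g ∈ ES.configGraph.edgeSet ∧ ES.AddsE g e} := by
  obtain ⟨g₀, hg₀, rfl⟩ := hH
  have hex : ∃ e, ES.AddsE g₀ e := by
    induction g₀ using Sym2.ind with
    | _ a b => exact addsE_of_adj hg₀
  obtain ⟨e, he⟩ := hex
  refine ⟨e, Set.ext fun g => ?_⟩
  simp only [Set.mem_setOf_eq]
  constructor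
  · rintro ⟨hg, htheta⟩
    exact ⟨hg, thetaRel_addsE htheta he⟩
  · rintro ⟨hg, hadds⟩
    exact ⟨hg, theta_of_addsE he hadds⟩

end EventStructure
namespace EventStructure

set_option linter.unusedSectionVars false
open scoped symmDiff

variable {E : Type*} [DecidableEq E] {ES : EventStructure E}

lemma emptyConfig_val : (ES.emptyConfig).1 = ∅ := rfl

lemma dist_empty (x : ES.Config) :
    ES.configGraph.dist ES.emptyConfig x = x.1.card := by
  rw [config_dist_eq]
  congr 1
  rw [emptyConfig_val, symmDiff_def]
  simp

lemma dist_adj {a b : ES.Config} (h : ES.configGraph.Adj a b) :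
    ES.configGraph.dist a b = 1 := by
  obtain ⟨e, he⟩ := adj_symmDiff h
  rw [config_dist_eq, he, Finset.card_singleton]

lemma isConfig_erase_of_max {c : ES.Config} {m : E}
    (hmax : ∀ x ∈ c.1, ES.le m x → m = x) : ES.IsConfig (c.1.erase m) := by
  constructor
  · intro x hx z hz
    rw [Finset.mem_erase] at hx ⊢
    refine ⟨fun hzm => hx.1 ?_, c.2.1 x hx.2 z hz⟩
    subst hzm
    exact (hmax x hx.2 hz).symm
  · intro x hx y hy
    exact c.2.2 x (Finset.mem_of_mem_erase hx) y (Finset.mem_of_mem_erase hy)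

/-- Identification of the prime vertex for a hyperplane all of whose edges add `e'`:
it is the prime configuration `↓e'`. -/
lemma prime_vertex_eq {Hp : Set (Sym2 ES.Config)} {e' : E} {u : ES.Config}
    (hall : ∀ g ∈ Hp, ES.AddsE g e')
    (hu : PrimeVertexFor ES.configGraph ES.emptyConfig Hp u) :
    u = ES.primeC e' := by
  obtain ⟨w, hadj, hint, huniq, hmem⟩ := hu
  have hadds := hall _ hmem
  have hd : w.1 ∆ u.1 = {e'} := hadds.symmDiff rfl
  have hint' := hint
  simp only [mInterval, Set.mem_setOf_eq] at hint'
  rw [dist_empty, dist_empty, dist_adj hadj.symm] at hint'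
  -- w.card + 1 = u.card
  have hcard : w.1.card + 1 = u.1.card := hint'
  have hsame : ∀ x, x ≠ e' → (x ∈ w.1 ↔ x ∈ u.1) := by
    intro x hx
    have : x ∉ w.1 ∆ u.1 := by rw [hd]; simpa using hx
    rw [Finset.mem_symmDiff] at this
    push_neg at this
    exact ⟨this.1, this.2⟩
  have he'mem : e' ∈ w.1 ∆ u.1 := by rw [hd]; simp
  rw [Finset.mem_symmDiff] at he'mem
  have he'u : e' ∈ u.1 ∧ e' ∉ w.1 := by
    rcases he'mem with ⟨hw, hu'⟩ | h
    · -- then u ⊆ w, contradicting cards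
      exfalso
      have : u.1 ⊆ w.1 := by
        intro x hx
        by_cases hxe : x = e'
        · subst hxe; exact absurd hx hu'
        · exact (hsame x hxe).mpr hx
      have := Finset.card_le_card this
      omega
    · exact ⟨h.1, h.2⟩
  have hwval : w.1 = u.1.erase e' := by
    ext x
    rw [Finset.mem_erase]
    by_cases hxe : x = e'
    · subst hxe; simp [he'u.2]
    · rw [hsame x hxe]; simp [hxe]
  -- every maximal element of u is e'
  have hkey : ∀ m ∈ u.1, (∀ x ∈ u.1, ES.le m x → m = x) → m = e' := by
    intro m hm hmax
    have hcfg := isConfig_erase_of_max (c := u) hmax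
    set u' : ES.Config := ⟨u.1.erase m, hcfg⟩ with hu'def
    have hcov : ES.Covers u' u := by
      refine ⟨m, Finset.notMem_erase m _, fun x => ?_⟩
      simp only [hu'def, Finset.mem_erase]
      constructor
      · intro hx
        by_cases hxm : x = m
        · exact Or.inl hxm
        · exact Or.inr ⟨hxm, hx⟩
      · rintro (rfl | ⟨_, hx⟩) <;> [exact hm; exact hx]
    have hadj' : ES.configGraph.Adj u u' := Or.inr hcov
    have hintu' : u' ∈ mInterval ES.configGraph ES.emptyConfig u := by
      simp only [mInterval, Set.mem_setOf_eq]
      rw [dist_empty, dist_empty, dist_adj hadj'.symm]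
      simp only [hu'def]
      exact Finset.card_erase_add_one hm
    have := huniq u' hadj' hintu'
    have heq : u.1.erase m = u.1.erase e' := by
      rw [← hwval]
      exact congrArg Subtype.val this
    by_contra hme
    have hmm : m ∈ u.1.erase m := by
      rw [heq, Finset.mem_erase]; exact ⟨hme, hm⟩
    exact (Finset.mem_erase.mp hmm).1 rfl
  -- u = ↓e'
  refine Subtype.ext ?_
  apply Finset.Subset.antisymm
  · intro x hx
    classical
    have hS : (u.1.filter (fun z => ES.le x z)).Nonempty :=
      ⟨x, Finset.mem_filter.mpr ⟨hx, ES.le_refl x⟩⟩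
    obtain ⟨m, hmS, hmmax⟩ := exists_maximal hS ES
    rw [Finset.mem_filter] at hmS
    have hmaxu : ∀ z ∈ u.1, ES.le m z → m = z := by
      intro z hz hle
      exact hmmax z (Finset.mem_filter.mpr ⟨hz, ES.le_trans _ _ _ hmS.2 hle⟩) hle
    have hme' := hkey m hmS.1 hmaxu
    subst hme'
    exact mem_downC.mpr hmS.2
  · intro x hx
    rw [show (ES.primeC e').1 = ES.downC e' from rfl, mem_downC] at hx
    exact u.2.1 e' he'u.1 x hx

section Labels

variable {A : Type*} [Nonempty A]

lemma stepLabel_extends (lab : E → A) {c c' : ES.Config} {e : E}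
    (h : ES.Extends c c' e) : stepLabel lab c.1 c'.1 = lab e := by
  have hex : ∃ x, (x ∈ c'.1 ∧ x ∉ c.1) ∨ (x ∈ c.1 ∧ x ∉ c'.1) :=
    ⟨e, Or.inl ⟨(h.2 e).mpr (Or.inl rfl), h.1⟩⟩
  rw [stepLabel, dif_pos hex]
  congr 1
  have hsp := hex.choose_spec
  rcases hsp with ⟨hin, hout⟩ | ⟨hin, hout⟩
  · rcases (h.2 _).mp hin with h' | h'
    · exact h'
    · exact absurd h' hout
  · exact absurd ((h.2 _).mpr (Or.inr hin)) hout

lemma walkWord_nil (lab : E → A) {x : ES.Config} :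
    walkWord lab (SimpleGraph.Walk.nil : ES.configGraph.Walk x x) = [] := by
  simp [walkWord]

lemma walkWord_cons (lab : E → A) {a a₁ b : ES.Config} (h : ES.configGraph.Adj a a₁)
    (q : ES.configGraph.Walk a₁ b) :
    walkWord lab (SimpleGraph.Walk.cons h q) = stepLabel lab a.1 a₁.1 :: walkWord lab q := by
  simp [walkWord, SimpleGraph.Walk.darts_cons]

/-- Along a tight (geodesic) walk from `x` up to `y`, the added events form a
linear-extension-like list. -/
lemma tight_walk_linExt (lab : E → A) : ∀ (n : ℕ) (x y : ES.Config)
    (p : ES.configGraph.Walk x y), x.1 ⊆ y.1 → p.length = n → (y.1 \ x.1).card = n →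
    ∃ L : List E, walkWord lab p = L.map lab ∧ L.Nodup ∧ (∀ e ∈ L, e ∉ x.1) ∧
      x.1 ∪ L.toFinset = y.1 ∧ L.Pairwise (fun a b => ¬ ES.le b a) := by
  intro n
  induction n with
  | zero =>
    intro x y p hsub hlen hcard
    have hxy : x = y := by
      refine Subtype.ext (Finset.Subset.antisymm hsub ?_)
      intro z hz
      by_contra hzx
      have : z ∈ y.1 \ x.1 := Finset.mem_sdiff.mpr ⟨hz, hzx⟩
      rw [Finset.card_eq_zero.mp hcard] at this
      exact absurd this (Finset.notMem_empty z)
    subst hxy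
    cases p with
    | nil => exact ⟨[], by simp [walkWord_nil], by simp, by simp, by simp, by simp⟩
    | cons h q => simp at hlen
  | succ n ih =>
    intro x y p hsub hlen hcard
    cases p with
    | nil => simp at hlen
    | @cons _ x₁ _ h q =>
      simp only [SimpleGraph.Walk.length_cons, Nat.succ.injEq] at hlen
      have hql : q.length = n := hlen
      rcases h with ⟨e, hext⟩ | ⟨e, hext⟩
      · -- up step
        have hx₁ : x₁.1 = insert e x.1 := hext.eq_insert
        have hey : e ∈ y.1 := by
          by_contra hey
          have hle := walk_symmDiff_le q
          have hge : (y.1 \ x₁.1).card = n + 1 := by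
            have : y.1 \ x₁.1 = y.1 \ x.1 := by
              ext z
              simp only [Finset.mem_sdiff, hx₁, Finset.mem_insert]
              constructor
              · rintro ⟨hz, hz'⟩; exact ⟨hz, fun hzx => hz' (Or.inr hzx)⟩
              · rintro ⟨hz, hz'⟩
                refine ⟨hz, fun hh => ?_⟩
                rcases hh with rfl | hh
                · exact hey hz
                · exact hz' hh
            rw [this, hcard]
          have hsub2 : y.1 \ x₁.1 ⊆ x₁.1 ∆ y.1 := by
            intro z hz
            rw [Finset.mem_sdiff] at hz
            exact Finset.mem_symmDiff.mpr (Or.inr ⟨hz.1, hz.2⟩)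
          have := Finset.card_le_card hsub2
          rw [hge] at this
          omega
        have hsub₁ : x₁.1 ⊆ y.1 := by
          rw [hx₁]
          intro z hz
          rcases Finset.mem_insert.mp hz with rfl | hz
          · exact hey
          · exact hsub hz
        have hcard₁ : (y.1 \ x₁.1).card = n := by
          have hstep : y.1 \ x₁.1 = (y.1 \ x.1).erase e := by
            ext z
            simp only [Finset.mem_sdiff, hx₁, Finset.mem_insert, Finset.mem_erase]
            tauto
          rw [hstep, Finset.card_erase_of_mem
            (Finset.mem_sdiff.mpr ⟨hey, hext.1⟩), hcard]
          rfl
        obtain ⟨L', hw', hnd', hnx', hun', hpw'⟩ := ih x₁ y q hsub₁ hql hcard₁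
        have hex₁ : e ∈ x₁.1 := by rw [hx₁]; exact Finset.mem_insert_self e _
        refine ⟨e :: L', ?_, ?_, ?_, ?_, ?_⟩
        · exact (walkWord_cons lab (Or.inl ⟨e, hext⟩ : ES.configGraph.Adj x x₁) q).trans
            (by rw [stepLabel_extends lab hext, hw', List.map_cons])
        · exact List.nodup_cons.mpr ⟨fun hc => hnx' e hc hex₁, hnd'⟩
        · intro a ha
          rcases List.mem_cons.mp ha with rfl | ha
          · exact hext.1
          · intro hax
            exact hnx' a ha (by rw [hx₁]; exact Finset.mem_insert_of_mem hax)
        · rw [List.toFinset_cons]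
          rw [← hun', hx₁]
          ext z
          simp only [Finset.mem_union, Finset.mem_insert, List.mem_toFinset]
          tauto
        · rw [List.pairwise_cons]
          refine ⟨fun b hb hble => ?_, hpw'⟩
          exact hnx' b hb (x₁.2.1 e hex₁ b hble)
      · -- down step: impossible
        exfalso
        have hx : x.1 = insert e x₁.1 := hext.eq_insert
        have hsub2 : y.1 \ x₁.1 ⊆ x₁.1 ∆ y.1 := by
          intro z hz
          rw [Finset.mem_sdiff] at hz
          exact Finset.mem_symmDiff.mpr (Or.inr ⟨hz.1, hz.2⟩)
        have hbig : (y.1 \ x₁.1).card = n + 2 := by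
          have hstep : y.1 \ x₁.1 = insert e (y.1 \ x.1) := by
            ext z
            simp only [Finset.mem_sdiff, Finset.mem_insert]
            constructor
            · rintro ⟨hz, hz'⟩
              by_cases hze : z = e
              · exact Or.inl hze
              · refine Or.inr ⟨hz, fun hzx => ?_⟩
                rw [hx, Finset.mem_insert] at hzx
                rcases hzx with rfl | hzx
                · exact hze rfl
                · exact hz' hzx
            · rintro (rfl | ⟨hz, hz'⟩)
              · exact ⟨hsub (by rw [hx]; exact Finset.mem_insert_self z _), hext.1⟩
              · exact ⟨hz, fun hzx => hz' (by rw [hx]; exact Finset.mem_insert_of_mem hzx)⟩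
          rw [hstep, Finset.card_insert_of_notMem, hcard]
          intro hc
          exact (Finset.mem_sdiff.mp hc).2 (by rw [hx]; exact Finset.mem_insert_self e _)
        have hle := walk_symmDiff_le q
        have := Finset.card_le_card hsub2
        omega

end Labels

end EventStructure
namespace EventStructure

set_option linter.unusedSectionVars false
open scoped symmDiff

variable {E : Type*} [DecidableEq E] {ES : EventStructure E}

/-- `L` is a linearization (nodup enumeration compatible with the causal order)
of the finset `s`. -/
def IsLinExt (ES : EventStructure E) (s : Finset E) (L : List E) : Prop :=
  L.Nodup ∧ L.toFinset = s ∧ L.Pairwise (fun a b => ¬ ES.le b a)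

lemma exists_minConflict {x y : E} (h : ES.conflict x y) :
    ∃ p q, ES.le p x ∧ ES.le q y ∧ ES.MinConflict p q := by
  classical
  set S : Finset (E × E) :=
    ((ES.downC x) ×ˢ (ES.downC y)).filter (fun pq => ES.conflict pq.1 pq.2) with hS
  have hxy : (x, y) ∈ S := by
    simp only [hS, Finset.mem_filter, Finset.mem_product, mem_downC]
    exact ⟨⟨ES.le_refl x, ES.le_refl y⟩, h⟩
  obtain ⟨⟨p, q⟩, hpq, hmin⟩ := S.exists_min_image (fun pq => ES.mu pq.1 + ES.mu pq.2) ⟨_, hxy⟩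
  simp only [hS, Finset.mem_filter, Finset.mem_product, mem_downC] at hpq
  refine ⟨p, q, hpq.1.1, hpq.1.2, hpq.2, fun hwit => ?_⟩
  obtain ⟨e'', hne1, hne2, hcase⟩ := hwit
  rcases hcase with ⟨hle, hconf⟩ | ⟨hle, hconf⟩
  · have hmem : (e'', q) ∈ S := by
      simp only [hS, Finset.mem_filter, Finset.mem_product, mem_downC]
      exact ⟨⟨ES.le_trans _ _ _ hle hpq.1.1, hpq.1.2⟩, hconf⟩
    have := hmin _ hmem
    have hlt := mu_lt_mu (ES := ES) hle hne1
    simp only at this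
    omega
  · have hmem : (p, e'') ∈ S := by
      simp only [hS, Finset.mem_filter, Finset.mem_product, mem_downC]
      exact ⟨⟨hpq.1.1, ES.le_trans _ _ _ hle hpq.1.2⟩, ES.conflict_symm _ _ hconf⟩
    have := hmin _ hmem
    have hlt := mu_lt_mu (ES := ES) hle hne2
    simp only at this
    omega

section Trace

variable {A : Type*} [Nonempty A] {I : A → A → Prop} {lab : E → A}

lemma traceEquiv_cons {a : A} {w₁ w₂ : List A} (h : TraceEquiv I w₁ w₂) :
    TraceEquiv I (a :: w₁) (a :: w₂) := by
  induction h with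
  | refl => exact Relation.ReflTransGen.refl
  | @tail b c _ hstep ih =>
    refine ih.tail ?_
    obtain ⟨u, v, x, y, hxy, h1, h2⟩ :
        ∃ u v x y, I x y ∧ b = u ++ x :: y :: v ∧ c = u ++ y :: x :: v := by
      cases hstep with | swap u v x y hxy => exact ⟨u, v, x, y, hxy, rfl, rfl⟩
    rw [h1, h2]
    exact SwapStep.swap (a :: u) v x y hxy

lemma traceEquiv_move_front {a : A} : ∀ (s r : List A), (∀ x ∈ s, I x a) →
    TraceEquiv I (s ++ a :: r) (a :: (s ++ r)) := by
  intro s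
  induction s with
  | nil => exact fun r _ => Relation.ReflTransGen.refl
  | cons x s' ih =>
    intro r hs
    have h1 : TraceEquiv I (x :: (s' ++ a :: r)) (x :: (a :: (s' ++ r))) :=
      traceEquiv_cons (ih r fun z hz => hs z (List.mem_cons_of_mem x hz))
    have h2 : SwapStep I (x :: a :: (s' ++ r)) (a :: x :: (s' ++ r)) :=
      SwapStep.swap [] (s' ++ r) x a (hs x List.mem_cons_self)
    exact Relation.ReflTransGen.trans h1 (Relation.ReflTransGen.single h2)

/-- Any two linearizations of a conflict-free finset have `I`-equivalent label
words. -/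
lemma linExt_traceEquiv (hlab : IsTraceLabeling ES I lab) :
    ∀ (n : ℕ) (c : Finset E), (∀ x ∈ c, ∀ y ∈ c, ¬ ES.conflict x y) →
    ∀ L₁ L₂ : List E, IsLinExt ES c L₁ → IsLinExt ES c L₂ → L₁.length = n →
    TraceEquiv I (L₁.map lab) (L₂.map lab) := by
  intro n
  induction n with
  | zero =>
    intro c hcf L₁ L₂ h₁ h₂ hlen
    have hL₁ : L₁ = [] := List.eq_nil_of_length_eq_zero hlen
    have hc : c = ∅ := by rw [← h₁.2.1, hL₁]; rfl
    have hL₂ : L₂ = [] := by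
      have := h₂.2.1
      rw [hc] at this
      exact List.toFinset_eq_empty_iff L₂ |>.mp this
    rw [hL₁, hL₂]
  | succ n ih =>
    intro c hcf L₁ L₂ h₁ h₂ hlen
    obtain ⟨hnd₁, htf₁, hpw₁⟩ := h₁
    obtain ⟨hnd₂, htf₂, hpw₂⟩ := h₂
    cases L₂ with
    | nil =>
      exfalso
      have : c = ∅ := by rw [← htf₂]; rfl
      rw [← htf₁] at this
      have := List.toFinset_eq_empty_iff L₁ |>.mp this
      rw [this] at hlen
      simp at hlen
    | cons a t₂ =>
      have hac : a ∈ c := by rw [← htf₂]; simp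
      have haL₁ : a ∈ L₁ := by rw [← List.mem_toFinset, htf₁]; exact hac
      obtain ⟨s, r, hsr⟩ := List.append_of_mem haL₁
      subst hsr
      -- facts from nodup / pairwise
      have hnas : a ∉ s := by
        intro hc'
        rw [List.nodup_append] at hnd₁
        exact hnd₁.2.2 a hc' a List.mem_cons_self rfl
      have hnar : a ∉ r := by
        rw [List.nodup_append] at hnd₁
        exact (List.nodup_cons.mp hnd₁.2.1).1
      rw [List.pairwise_append] at hpw₁
      obtain ⟨hpws, hpwar, hcross⟩ := hpw₁
      rw [List.pairwise_cons] at hpwar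
      obtain ⟨har, hpwr⟩ := hpwar
      rw [List.pairwise_cons] at hpw₂
      obtain ⟨hat₂, hpwt₂⟩ := hpw₂
      have hamin : ∀ z ∈ c, ES.le z a → z = a := by
        intro z hz hle
        rw [← htf₂, List.mem_toFinset] at hz
        rcases List.mem_cons.mp hz with rfl | hz
        · rfl
        · exact absurd hle (hat₂ z hz)
      -- labels of s are independent from lab a
      have hIs : ∀ x ∈ s, I (lab x) (lab a) := by
        intro x hx
        have hxc : x ∈ c := by
          rw [← htf₁, List.mem_toFinset]
          exact List.mem_append.mpr (Or.inl hx)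
        have hxa : x ≠ a := fun h => hnas (h ▸ hx)
        by_contra hI
        rcases hlab.les3 x a hI with hle | hle | hconf
        · exact hxa (hamin x hxc hle)
        · exact hcross x hx a List.mem_cons_self hle
        · exact hcf x hxc a hac hconf
      -- move a to the front of L₁
      have hmove : TraceEquiv I ((s ++ a :: r).map lab) ((a :: (s ++ r)).map lab) := by
        have := traceEquiv_move_front (a := lab a) (s.map lab) (r.map lab)
          (fun x hx => by
            obtain ⟨x', hx', rfl⟩ := List.mem_map.mp hx
            exact hIs x' hx')
        simpa using this
      -- recurse on tails
      have hlin₁' : IsLinExt ES (c.erase a) (s ++ r) := by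
        refine ⟨?_, ?_, ?_⟩
        · rw [List.nodup_append] at hnd₁ ⊢
          exact ⟨hnd₁.1, (List.nodup_cons.mp hnd₁.2.1).2,
            fun x hx y hy => hnd₁.2.2 x hx y (List.mem_cons_of_mem a hy)⟩
        · rw [← htf₁]
          ext z
          simp only [List.mem_toFinset, List.mem_append, Finset.mem_erase, List.mem_cons]
          constructor
          · rintro (hz | hz)
            · exact ⟨fun h => hnas (h ▸ hz), Or.inl hz⟩
            · exact ⟨fun h => hnar (h ▸ hz), Or.inr (Or.inr hz)⟩
          · rintro ⟨hza, hz | rfl | hz⟩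
            · exact Or.inl hz
            · exact absurd rfl hza
            · exact Or.inr hz
        · rw [List.pairwise_append]
          exact ⟨hpws, hpwr, fun x hx y hy => hcross x hx y (List.mem_cons_of_mem a hy)⟩
      have hlin₂' : IsLinExt ES (c.erase a) t₂ := by
        have hnat₂ : a ∉ t₂ := (List.nodup_cons.mp hnd₂).1
        refine ⟨(List.nodup_cons.mp hnd₂).2, ?_, hpwt₂⟩
        rw [← htf₂]
        ext z
        simp only [List.mem_toFinset, Finset.mem_erase, List.mem_cons]
        constructor
        · intro hz
          exact ⟨fun h => hnat₂ (h ▸ hz), Or.inr hz⟩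
        · rintro ⟨hza, rfl | hz⟩
          · exact absurd rfl hza
          · exact hz
      have hcf' : ∀ x ∈ c.erase a, ∀ y ∈ c.erase a, ¬ ES.conflict x y := fun x hx y hy =>
        hcf x (Finset.mem_of_mem_erase hx) y (Finset.mem_of_mem_erase hy)
      have hlen' : (s ++ r).length = n := by
        rw [List.length_append] at hlen ⊢
        simp only [List.length_cons] at hlen
        omega
      have htail := ih (c.erase a) hcf' (s ++ r) t₂ hlin₁' hlin₂' hlen'
      refine hmove.trans ?_
      rw [List.map_cons, List.map_cons]
      exact traceEquiv_cons htail

end Trace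

end EventStructure
namespace EventStructure

set_option linter.unusedSectionVars false
open scoped symmDiff

variable {E : Type*} [DecidableEq E] {ES : EventStructure E}

lemma pairwise_swap {α : Type*} {R : α → α → Prop} {l₁ l₂ : List α} {x y : α}
    (h : List.Pairwise R (l₁ ++ x :: y :: l₂)) (hxy : R y x) :
    List.Pairwise R (l₁ ++ y :: x :: l₂) := by
  rw [List.pairwise_append] at h ⊢
  obtain ⟨h1, h2, h3⟩ := h
  rw [List.pairwise_cons] at h2
  obtain ⟨hx, h2⟩ := h2
  rw [List.pairwise_cons] at h2
  obtain ⟨hy, h2⟩ := h2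
  refine ⟨h1, ?_, ?_⟩
  · rw [List.pairwise_cons]
    refine ⟨fun a' ha' => ?_, ?_⟩
    · rcases List.mem_cons.mp ha' with rfl | ha'
      · exact hxy
      · exact hy a' ha'
    · rw [List.pairwise_cons]
      exact ⟨fun a' ha' => hx a' (List.mem_cons_of_mem y ha'), h2⟩
  · intro a ha b hb
    rcases List.mem_cons.mp hb with rfl | hb
    · exact h3 a ha b (by simp)
    · rcases List.mem_cons.mp hb with rfl | hb
      · exact h3 a ha b (by simp)
      · exact h3 a ha b (by simp [hb])

section Trace

variable {A : Type*} [Nonempty A] {I : A → A → Prop} {lab : E → A}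

lemma swapStep_lift (hlab : IsTraceLabeling ES I lab) (hI_irrefl : ∀ a, ¬ I a a)
    (c : ES.Config) {L : List E} {w : List A}
    (hL : IsLinExt ES c.1 L) (h : SwapStep I (L.map lab) w) :
    ∃ L', IsLinExt ES c.1 L' ∧ w = L'.map lab := by
  have hdecomp : ∀ {X Y : List A}, SwapStep I X Y →
      ∃ u v a b, I a b ∧ X = u ++ a :: b :: v ∧ Y = u ++ b :: a :: v := by
    intro X Y hXY
    cases hXY with | swap u v a b hIab => exact ⟨u, v, a, b, hIab, rfl, rfl⟩
  obtain ⟨u, v, a, b, hIab, hXeq, hweq⟩ := hdecomp h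
  obtain ⟨l₁, l₂, hL12, hmap₁, hmap₂⟩ := List.map_eq_append_iff.mp hXeq
  obtain ⟨x, l₂', hl₂, hlabx, hmap₂'⟩ := List.map_eq_cons_iff.mp hmap₂
  obtain ⟨y, l₃, hl₂', hlaby, hmap₃⟩ := List.map_eq_cons_iff.mp hmap₂'
  subst hl₂' hl₂ hL12
  obtain ⟨hnd, htf, hpw⟩ := hL
  -- x and y are incomparable
  have hIxy : I (lab x) (lab y) := by rw [hlabx, hlaby]; exact hIab
  have hxy_ne : x ≠ y := fun h => hI_irrefl (lab y) (h ▸ hIxy)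
  rw [List.pairwise_append] at hpw
  obtain ⟨hpw₁, hpw₂, hcross⟩ := hpw
  rw [List.pairwise_cons] at hpw₂
  obtain ⟨hxall, hpw₂⟩ := hpw₂
  rw [List.pairwise_cons] at hpw₂
  obtain ⟨hyall, hpw₃⟩ := hpw₂
  have hnyx : ¬ ES.le y x := hxall y List.mem_cons_self
  have hnxy : ¬ ES.le x y := by
    intro hle
    by_cases himm : ES.ImmPred x y
    · exact hlab.les2 x y (Or.inl himm) hIxy
    · have hz : ∃ z, ES.le x z ∧ ES.le z y ∧ z ≠ x ∧ z ≠ y := by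
        by_contra hno
        push_neg at hno
        exact himm ⟨hle, hxy_ne, fun z h1 h2 => by
          by_cases hzx : z = x
          · exact Or.inl hzx
          · by_cases hzy : z = y
            · exact Or.inr hzy
            · exact absurd (hno z h1 h2 hzx) hzy⟩
      obtain ⟨z, hz1, hz2, hzx, hzy⟩ := hz
      have hyc : y ∈ c.1 := by
        rw [← htf]
        simp [List.mem_toFinset, List.mem_append]
      have hzc : z ∈ c.1 := c.2.1 y hyc z hz2
      have hzL : z ∈ l₁ ++ x :: y :: l₃ := by rw [← List.mem_toFinset, htf]; exact hzc
      rcases List.mem_append.mp hzL with hz' | hz'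
      · exact hcross z hz' x List.mem_cons_self hz1
      · rcases List.mem_cons.mp hz' with rfl | hz'
        · exact hzx rfl
        · rcases List.mem_cons.mp hz' with rfl | hz'
          · exact hzy rfl
          · exact hyall z hz' hz2
  -- the swapped list
  refine ⟨l₁ ++ y :: x :: l₃, ⟨?_, ?_, ?_⟩, ?_⟩
  · have hperm : (l₁ ++ x :: y :: l₃).Perm (l₁ ++ y :: x :: l₃) :=
      List.Perm.append_left l₁ (List.Perm.swap y x l₃)
    exact hperm.nodup hnd
  · have hperm : (l₁ ++ x :: y :: l₃).Perm (l₁ ++ y :: x :: l₃) :=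
      List.Perm.append_left l₁ (List.Perm.swap y x l₃)
    rw [← htf]
    ext z
    simp only [List.mem_toFinset]
    exact ⟨fun h => (hperm.symm.mem_iff).mp h, fun h => (hperm.mem_iff).mp h⟩
  · refine pairwise_swap ?_ hnxy
    rw [List.pairwise_append]
    refine ⟨hpw₁, ?_, hcross⟩
    rw [List.pairwise_cons]
    refine ⟨hxall, ?_⟩
    rw [List.pairwise_cons]
    exact ⟨hyall, hpw₃⟩
  · rw [hweq, List.map_append, List.map_cons, List.map_cons, hmap₁, hmap₃, hlabx, hlaby]

lemma traceEquiv_linExt_lift (hlab : IsTraceLabeling ES I lab)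
    (hI_irrefl : ∀ a, ¬ I a a) (c : ES.Config) {L : List E} {w : List A}
    (hL : IsLinExt ES c.1 L) (h : TraceEquiv I (L.map lab) w) :
    ∃ L', IsLinExt ES c.1 L' ∧ w = L'.map lab := by
  induction h with
  | refl => exact ⟨L, hL, rfl⟩
  | tail _ hstep ih =>
    obtain ⟨L₁, hL₁, rfl⟩ := ih
    exact swapStep_lift hlab hI_irrefl c hL₁ hstep

/-- Linearizations of configurations are determined by their label words
(relative to a common downward-closed part `s` already removed). -/
lemma linExt_label_inj (hlab : IsTraceLabeling ES I lab) (hI_irrefl : ∀ a, ¬ I a a) :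
    ∀ (n : ℕ) (d d' : ES.Config) (s : Finset E),
      (∀ x ∈ s, ∀ z, ES.le z x → z ∈ s) → s ⊆ d.1 → s ⊆ d'.1 →
      ∀ L L' : List E, IsLinExt ES (d.1 \ s) L → IsLinExt ES (d'.1 \ s) L' →
      L.map lab = L'.map lab → L.length = n → L = L' := by
  intro n
  induction n with
  | zero =>
    intro d d' s hs hsd hsd' L L' hL hL' hmap hlen
    have h1 : L = [] := List.eq_nil_of_length_eq_zero hlen
    have h2 : L' = [] := by
      have : (L'.map lab).length = 0 := by rw [← hmap, List.length_map, hlen]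
      rw [List.length_map] at this
      exact List.eq_nil_of_length_eq_zero this
    rw [h1, h2]
  | succ n ih =>
    intro d d' s hs hsd hsd' L L' hL hL' hmap hlen
    cases L with
    | nil => simp at hlen
    | cons x t =>
      cases L' with
      | nil => simp at hmap
      | cons x' t' =>
        simp only [List.map_cons, List.cons.injEq] at hmap
        obtain ⟨hlabeq, hmapt⟩ := hmap
        obtain ⟨hnd, htf, hpw⟩ := hL
        obtain ⟨hnd', htf', hpw'⟩ := hL'
        rw [List.pairwise_cons] at hpw hpw'
        have hxds : x ∈ d.1 \ s := by rw [← htf]; simp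
        have hx'ds : x' ∈ d'.1 \ s := by rw [← htf']; simp
        have hxmin : ∀ z ∈ d.1 \ s, ES.le z x → z = x := by
          intro z hz hle
          rw [← htf, List.mem_toFinset] at hz
          rcases List.mem_cons.mp hz with rfl | hz
          · rfl
          · exact absurd hle (hpw.1 z hz)
        have hx'min : ∀ z ∈ d'.1 \ s, ES.le z x' → z = x' := by
          intro z hz hle
          rw [← htf', List.mem_toFinset] at hz
          rcases List.mem_cons.mp hz with rfl | hz
          · rfl
          · exact absurd hle (hpw'.1 z hz)
        have hxx' : x = x' := by
          by_contra hne
          have hnI : ¬ I (lab x) (lab x') := by rw [hlabeq]; exact hI_irrefl _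
          rcases hlab.les3 x x' hnI with hle | hle | hconf
          · -- x ≤ x'
            have hxd' : x ∈ d'.1 := d'.2.1 x' (Finset.mem_sdiff.mp hx'ds).1 x hle
            have hxs : x ∉ s := (Finset.mem_sdiff.mp hxds).2
            exact hne (hx'min x (Finset.mem_sdiff.mpr ⟨hxd', hxs⟩) hle)
          · have hx'd : x' ∈ d.1 := d.2.1 x (Finset.mem_sdiff.mp hxds).1 x' hle
            have hx's : x' ∉ s := (Finset.mem_sdiff.mp hx'ds).2
            exact hne ((hxmin x' (Finset.mem_sdiff.mpr ⟨hx'd, hx's⟩) hle).symm)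
          · obtain ⟨p, q, hpx, hqx', hminc⟩ := exists_minConflict hconf
            have hpd : p ∈ d.1 := d.2.1 x (Finset.mem_sdiff.mp hxds).1 p hpx
            have hqd' : q ∈ d'.1 := d'.2.1 x' (Finset.mem_sdiff.mp hx'ds).1 q hqx'
            by_cases hps : p ∈ s
            · exact d'.2.2 p (hsd' hps) q hqd' hminc.1
            · by_cases hqs : q ∈ s
              · exact d.2.2 p hpd q (hsd hqs) hminc.1
              · have hp : p = x := hxmin p (Finset.mem_sdiff.mpr ⟨hpd, hps⟩) hpx
                have hq : q = x' := hx'min q (Finset.mem_sdiff.mpr ⟨hqd', hqs⟩) hqx'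
                subst hp hq
                exact hlab.les1 p q hminc hlabeq
        subst hxx'
        -- recurse
        have hxd : x ∈ d.1 := (Finset.mem_sdiff.mp hxds).1
        have hxd' : x ∈ d'.1 := (Finset.mem_sdiff.mp hx'ds).1
        have hs' : ∀ w ∈ insert x s, ∀ z, ES.le z w → z ∈ insert x s := by
          intro w hw z hz
          rcases Finset.mem_insert.mp hw with rfl | hw
          · by_cases hzs : z ∈ s
            · exact Finset.mem_insert_of_mem hzs
            · have hzd : z ∈ d.1 := d.2.1 w hxd z hz
              exact Finset.mem_insert.mpr (Or.inl
                (hxmin z (Finset.mem_sdiff.mpr ⟨hzd, hzs⟩) hz))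
          · exact Finset.mem_insert_of_mem (hs w hw z hz)
        have hsd₂ : insert x s ⊆ d.1 := Finset.insert_subset hxd hsd
        have hsd₂' : insert x s ⊆ d'.1 := Finset.insert_subset hxd' hsd'
        have htfin : ∀ (dd : ES.Config) (tt : List E), (x :: tt).toFinset = dd.1 \ s →
            x ∉ tt → tt.toFinset = dd.1 \ insert x s := by
          intro dd tt htt hxtt
          ext z
          simp only [List.mem_toFinset, Finset.mem_sdiff, Finset.mem_insert]
          constructor
          · intro hz
            have hzds : z ∈ dd.1 \ s := by
              rw [← htt]
              simp [List.mem_toFinset, hz]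
            rw [Finset.mem_sdiff] at hzds
            push_neg
            exact ⟨hzds.1, fun h => absurd (h ▸ hz) hxtt, hzds.2⟩
          · rintro ⟨hzd, hzx⟩
            push_neg at hzx
            have : z ∈ (x :: tt).toFinset := by
              rw [htt, Finset.mem_sdiff]
              exact ⟨hzd, hzx.2⟩
            rcases List.mem_cons.mp (List.mem_toFinset.mp this) with rfl | hz
            · exact absurd rfl hzx.1
            · exact hz
        have hLt : IsLinExt ES (d.1 \ insert x s) t :=
          ⟨(List.nodup_cons.mp hnd).2, htfin d t htf (List.nodup_cons.mp hnd).1, hpw.2⟩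
        have hLt' : IsLinExt ES (d'.1 \ insert x s) t' :=
          ⟨(List.nodup_cons.mp hnd').2, htfin d' t' htf' (List.nodup_cons.mp hnd').1, hpw'.2⟩
        have hlent : t.length = n := by simpa using hlen
        rw [ih d d' (insert x s) hs' hsd₂ hsd₂' t t' hLt hLt' hmapt hlent]

end Trace

end EventStructure
namespace EventStructure

set_option linter.unusedSectionVars false
open scoped symmDiff

variable {E : Type*} [DecidableEq E] {ES : EventStructure E}

lemma orientation {x y : ES.Config} {e : E} (hd : x.1 ∆ y.1 = {e})
    (hlt : x.1.card < y.1.card) : e ∉ x.1 ∧ e ∈ y.1 ∧ y.1 = insert e x.1 := by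
  have hsame : ∀ t, t ≠ e → (t ∈ x.1 ↔ t ∈ y.1) := by
    intro t ht
    have : t ∉ x.1 ∆ y.1 := by rw [hd]; simpa using ht
    rw [Finset.mem_symmDiff] at this
    push_neg at this
    exact ⟨this.1, this.2⟩
  have hememb : e ∈ x.1 ∆ y.1 := by rw [hd]; simp
  rw [Finset.mem_symmDiff] at hememb
  rcases hememb with ⟨hex, hey⟩ | ⟨hey, hex⟩
  · exfalso
    have hsubset : y.1 ⊆ x.1 := by
      intro t ht
      by_cases hte : t = e
      · exact absurd (hte ▸ ht) hey
      · exact (hsame t hte).mpr ht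
    have := Finset.card_le_card hsubset
    omega
  · refine ⟨hex, hey, ?_⟩
    ext t
    rw [Finset.mem_insert]
    by_cases hte : t = e
    · subst hte; simp [hey]
    · rw [← hsame t hte]; simp [hte]

lemma symmDiff_insert_of_mem {w x : Finset E} {e : E} (hew : e ∈ w) (hex : e ∉ x) :
    w ∆ insert e x = (w ∆ x).erase e := by
  ext t
  simp only [Finset.mem_symmDiff, Finset.mem_insert, Finset.mem_erase]
  by_cases hte : t = e
  · subst hte; simp [hew, hex]
  · simp [hte]

lemma symmDiff_insert_of_not_mem {w x : Finset E} {e : E} (hew : e ∉ w) (hex : e ∉ x) :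
    w ∆ insert e x = insert e (w ∆ x) := by
  ext t
  simp only [Finset.mem_symmDiff, Finset.mem_insert]
  by_cases hte : t = e
  · subst hte; simp [hew, hex]
  · simp [hte]

end EventStructure
open EventStructure in
open scoped symmDiff in
/-- For hyperplanes `H'`, `H` of `G(E)` with associated prime
vertices `u`, `v`, one has `H' ≤ H` iff `⟨σ_u⟩ ⊑ ⟨σ_v⟩`. -/
theorem stmt7 {E A : Type*} [Fintype A] [Nonempty A]
    (ES : EventStructure E) (I : A → A → Prop)
    (hI_irrefl : ∀ a, ¬ I a a) (hI_symm : ∀ a b, I a b → I b a)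
    (lab : E → A) (hlab : IsTraceLabeling ES I lab)
    (H' H : Set (Sym2 ES.Config))
    (hH' : IsHyperplane ES.configGraph H') (hH : IsHyperplane ES.configGraph H)
    (u v : ES.Config)
    (hu : PrimeVertexFor ES.configGraph ES.emptyConfig H' u)
    (hv : PrimeVertexFor ES.configGraph ES.emptyConfig H v)
    (p : ES.configGraph.Walk ES.emptyConfig u)
    (q : ES.configGraph.Walk ES.emptyConfig v)
    (hp : p.length = ES.configGraph.dist ES.emptyConfig u)
    (hq : q.length = ES.configGraph.dist ES.emptyConfig v) :
    HypLe ES.configGraph ES.emptyConfig H' H ↔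
      ∃ w w' : List A, TraceEquiv I (walkWord lab p) w ∧
        TraceEquiv I (walkWord lab q) w' ∧ w <+: w' := by
  classical
  obtain ⟨e', hH'char⟩ := hyperplane_char hH'
  obtain ⟨e, hHchar⟩ := hyperplane_char hH
  have hue : u = ES.primeC e' :=
    prime_vertex_eq (fun g hg => by rw [hH'char] at hg; exact hg.2) hu
  have hve : v = ES.primeC e :=
    prime_vertex_eq (fun g hg => by rw [hHchar] at hg; exact hg.2) hv
  -- linearizations from the geodesics p and q
  have hsub0u : (ES.emptyConfig).1 ⊆ u.1 := by rw [emptyConfig_val]; exact Finset.empty_subset _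
  have hsub0v : (ES.emptyConfig).1 ⊆ v.1 := by rw [emptyConfig_val]; exact Finset.empty_subset _
  have hpcard : (u.1 \ (ES.emptyConfig).1).card = p.length := by
    rw [hp, dist_empty, emptyConfig_val, Finset.sdiff_empty]
  have hqcard : (v.1 \ (ES.emptyConfig).1).card = q.length := by
    rw [hq, dist_empty, emptyConfig_val, Finset.sdiff_empty]
  obtain ⟨Lp, hwp, hndp, _, hunp, hpwp⟩ :=
    tight_walk_linExt lab p.length ES.emptyConfig u p hsub0u rfl hpcard
  obtain ⟨Lq, hwq, hndq, _, hunq, hpwq⟩ :=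
    tight_walk_linExt lab q.length ES.emptyConfig v q hsub0v rfl hqcard
  have htfp : Lp.toFinset = u.1 := by
    rw [← hunp, emptyConfig_val, Finset.empty_union]
  have htfq : Lq.toFinset = v.1 := by
    rw [← hunq, emptyConfig_val, Finset.empty_union]
  have hLp : IsLinExt ES u.1 Lp := ⟨hndp, htfp, hpwp⟩
  have hLq : IsLinExt ES v.1 Lq := ⟨hndq, htfq, hpwq⟩
  have he'u : e' ∈ u.1 := by
    rw [hue]
    exact mem_downC.mpr (ES.le_refl e')
  constructor
  · -- H' ≤ H implies the trace prefix
    intro hle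
    have hsub : u.1 ⊆ v.1 := by
      rcases hle with heq | hsep
      · -- H' = H, so e' = e and u = v
        obtain ⟨w0, hadj0, hint0, huniq0, hmem0⟩ := hu
        have ha1 : ES.AddsE s(w0, u) e' := by rw [hH'char] at hmem0; exact hmem0.2
        have ha2 : ES.AddsE s(w0, u) e := by
          rw [heq, hHchar] at hmem0; exact hmem0.2
        have hee : e' = e := ha1.unique ha2
        rw [hue, hve, hee]
      · -- H' separates v0 from H: then e' ∈ v
        obtain ⟨w0, hadj0, hint0, huniq0, hmem0⟩ := hu
        obtain ⟨w1, hadj1, hint1, huniq1, hmem1⟩ := hv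
        have ha1 : ES.AddsE s(w0, u) e' := by rw [hH'char] at hmem0; exact hmem0.2
        have hd0 : w0.1 ∆ u.1 = {e'} := ha1.symmDiff rfl
        have hint0' := hint0
        simp only [mInterval, Set.mem_setOf_eq] at hint0'
        rw [dist_empty, dist_empty, dist_adj hadj0.symm] at hint0'
        have hcard0 : w0.1.card < u.1.card := by omega
        obtain ⟨he'w0, he'u', hins⟩ := orientation hd0 hcard0
        have hltd : ES.configGraph.dist ES.emptyConfig w0 <
            ES.configGraph.dist ES.emptyConfig u := by
          rw [dist_empty, dist_empty]; exact hcard0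
        have hmem1' : s(v, w1) ∈ H := by rw [Sym2.eq_swap]; exact hmem1
        have hdist := hsep w0 u hmem0 hltd v w1 hmem1'
        rw [config_dist_eq, config_dist_eq] at hdist
        -- show e' ∈ v.1
        have he'v : e' ∈ v.1 := by
          by_contra he'v
          have : v.1 ∆ u.1 = insert e' (v.1 ∆ w0.1) := by
            rw [hins]
            exact symmDiff_insert_of_not_mem he'v he'w0
          rw [this] at hdist
          have hnotin : e' ∉ v.1 ∆ w0.1 := by
            rw [Finset.mem_symmDiff]
            push_neg
            exact ⟨fun h => absurd h he'v, fun h => absurd h he'w0⟩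
          rw [Finset.card_insert_of_notMem hnotin] at hdist
          omega
        -- u = ↓e' ⊆ v
        rw [hue]
        intro t ht
        rw [show (ES.primeC e').1 = ES.downC e' from rfl, mem_downC] at ht
        exact v.2.1 e' he'v t ht
    -- build the common extension word
    obtain ⟨r, hr⟩ := exists_walk_length (ES := ES) ((u.1 ∆ v.1).card) u v rfl
    have hrd : (v.1 \ u.1).card = r.length := by
      rw [hr]
      congr 1
      rw [symmDiff_def]
      simp [Finset.sdiff_eq_empty_iff_subset.mpr hsub]
    obtain ⟨LM, hwM, hndM, hnM, hunM, hpwM⟩ :=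
      tight_walk_linExt lab r.length u v r hsub rfl hrd
    have hL' : IsLinExt ES v.1 (Lp ++ LM) := by
      refine ⟨?_, ?_, ?_⟩
      · rw [List.nodup_append]
        exact ⟨hndp, hndM, fun a ha b hb hab => hnM b hb (by subst hab; rw [← htfp]; simp [ha])⟩
      · rw [List.toFinset_append, htfp, ← hunM]
      · rw [List.pairwise_append]
        refine ⟨hpwp, hpwM, fun a ha b hb hba => ?_⟩
        have hau : a ∈ u.1 := by rw [← htfp]; simp [ha]
        exact hnM b hb (u.2.1 a hau b hba)
    have hequiv : TraceEquiv I (Lq.map lab) ((Lp ++ LM).map lab) :=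
      linExt_traceEquiv hlab Lq.length v.1 v.2.2 Lq (Lp ++ LM) hLq hL' rfl
    refine ⟨walkWord lab p, (Lp ++ LM).map lab, Relation.ReflTransGen.refl, ?_, ?_⟩
    · rw [hwq]; exact hequiv
    · rw [hwp, List.map_append]
      exact ⟨LM.map lab, rfl⟩
  · -- trace prefix implies H' ≤ H
    rintro ⟨w, w', hw, hw', hpre⟩
    rw [hwp] at hw
    rw [hwq] at hw'
    obtain ⟨L₁, hL₁, rfl⟩ := traceEquiv_linExt_lift hlab hI_irrefl u hLp hw
    obtain ⟨L₂, hL₂, rfl⟩ := traceEquiv_linExt_lift hlab hI_irrefl v hLq hw'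
    -- the prefix of L₂ matching L₁
    set L₃ := L₂.take L₁.length with hL₃def
    have hmap₃ : L₃.map lab = L₁.map lab := by
      obtain ⟨t, ht⟩ := hpre
      rw [hL₃def, List.map_take, ← ht, List.take_left']
      rw [List.length_map]
    obtain ⟨hnd₂, htf₂, hpw₂⟩ := hL₂
    have hsplit : L₃ ++ L₂.drop L₁.length = L₂ := List.take_append_drop _ _
    have hsubL₃ : ∀ a ∈ L₃, a ∈ v.1 := by
      intro a ha
      rw [← htf₂, List.mem_toFinset]
      exact (List.take_sublist _ _).subset ha
    have hc'' : ES.IsConfig L₃.toFinset := by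
      constructor
      · intro a ha z hz
        rw [List.mem_toFinset] at ha ⊢
        have hzv : z ∈ v.1 := v.2.1 a (hsubL₃ a ha) z hz
        have hzL₂ : z ∈ L₂ := by rw [← List.mem_toFinset, htf₂]; exact hzv
        rw [← hsplit, List.mem_append] at hzL₂
        rcases hzL₂ with hz' | hz'
        · exact hz'
        · exfalso
          have hcross := (List.pairwise_append.mp (by rw [hsplit]; exact hpw₂)).2.2
          exact hcross a ha z hz' hz
      · intro a ha b hb
        rw [List.mem_toFinset] at ha hb
        exact v.2.2 a (hsubL₃ a ha) b (hsubL₃ b hb)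
    have hL₃lin : IsLinExt ES ((⟨L₃.toFinset, hc''⟩ : ES.Config)).1 L₃ :=
      ⟨hnd₂.sublist (List.take_sublist _ _), rfl,
        hpw₂.sublist (List.take_sublist _ _)⟩
    have h13 : L₁ = L₃ := by
      refine linExt_label_inj hlab hI_irrefl L₁.length u ⟨L₃.toFinset, hc''⟩ ∅
        (by simp) (Finset.empty_subset _) (Finset.empty_subset _) L₁ L₃ ?_ ?_
        hmap₃.symm rfl
      · rw [Finset.sdiff_empty]; exact hL₁
      · rw [Finset.sdiff_empty]; exact hL₃lin
    have hsub : u.1 ⊆ v.1 := by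
      rw [← hL₁.2.1, h13]
      intro t ht
      rw [List.mem_toFinset] at ht
      rw [← htf₂, List.mem_toFinset]
      exact (List.take_sublist _ _).subset ht
    have he'v : e' ∈ v.1 := hsub he'u
    have he'e : ES.le e' e := by
      rw [hve] at he'v
      rw [show (ES.primeC e).1 = ES.downC e from rfl, mem_downC] at he'v
      exact he'v
    by_cases hee : e' = e
    · left
      rw [hH'char, hHchar, hee]
    · right
      intro x y hxy hdlt w z hwz
      have haddxy : ES.AddsE s(x, y) e' := by rw [hH'char] at hxy; exact hxy.2
      have hdxy : x.1 ∆ y.1 = {e'} := haddxy.symmDiff rfl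
      rw [dist_empty, dist_empty] at hdlt
      obtain ⟨he'x, he'y, hyins⟩ := orientation hdxy hdlt
      have haddwz : ES.AddsE s(w, z) e := by rw [hHchar] at hwz; exact hwz.2
      obtain ⟨a, b, heq2, hext2⟩ := haddwz
      have he'b : e' ∈ b.1 := by
        have heb : e ∈ b.1 := (hext2.2 e).mpr (Or.inl rfl)
        exact b.2.1 e heb e' he'e
      have he'a : e' ∈ a.1 := by
        rcases (hext2.2 e').mp he'b with h' | h'
        · exact absurd h' hee
        · exact h'
      have he'w : e' ∈ w.1 := by
        rw [Sym2.eq_iff] at heq2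
        rcases heq2 with ⟨rfl, rfl⟩ | ⟨rfl, rfl⟩
        · exact he'a
        · exact he'b
      rw [config_dist_eq, config_dist_eq, hyins,
        symmDiff_insert_of_mem he'w he'x]
      have hmem : e' ∈ w.1 ∆ x.1 := Finset.mem_symmDiff.mpr (Or.inl ⟨he'w, he'x⟩)
      exact Finset.card_erase_lt_of_mem hmem
end

section
/- Let E be an event structure with a regular M-labeled structure given by a labeling λ over a trace alphabet M = (Σ, I), and let h be a letter not in Σ. Then the hairing Ė of E, equipped with the labeling λ̇ that extends λ by λ̇(e_c) = h for every new event e_c, is a regular Ṁ-labeled event structure over the trace alphabet Ṁ = (Σ ∪ {h}, I); in particular, the hairing of a trace-regular event structure is trace-regular. -/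
/-- The set of events of `E ∖ c`: events outside `c` not in conflict with `c`. -/
abbrev Residual {E : Type*} (ES : EventStructure E) (c : ES.Config) : Set E :=
  {e | e ∉ c.1 ∧ ∀ e' ∈ c.1, ¬ ES.conflict e' e}

/-- The rooted labeled event structures `E ∖ c` and `E ∖ c'` are isomorphic. -/
abbrev ResidualIso {E A : Type*} (ES : EventStructure E) (lab : E → A)
    (c c' : ES.Config) : Prop :=
  ∃ f : Residual ES c ≃ Residual ES c',
    (∀ x y : Residual ES c, ES.le x.1 y.1 ↔ ES.le (f x).1 (f y).1) ∧
    (∀ x y : Residual ES c, ES.conflict x.1 y.1 ↔ ES.conflict (f x).1 (f y).1) ∧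
    ∀ x : Residual ES c, lab (f x).1 = lab x.1

/-- A labeled event structure is regular: the rooted labeled event structures
`E ∖ c` fall into finitely many isomorphism classes. -/
abbrev RegularLabeled {E A : Type*} (ES : EventStructure E) (lab : E → A) : Prop :=
  ∃ s : Set ES.Config, s.Finite ∧ ∀ c : ES.Config, ∃ c' ∈ s, ResidualIso ES lab c c'

namespace Stmt19Aux

open EventStructure

variable {E : Type*} [DecidableEq E]
set_option linter.unusedSectionVars false

lemma mem_residual_sdiff {ES : EventStructure E} (c₁ c' : ES.Config) (hcc : c₁.1 ⊆ c'.1)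
    {e : E} (h1 : e ∈ c'.1) (h2 : e ∉ c₁.1) : e ∈ Residual ES c₁ :=
  ⟨h2, fun a ha => c'.2.2 a (hcc ha) e h1⟩

lemma push_isConfig {ES : EventStructure E} (c₁ c₂ : ES.Config) (g : E → E)
    (hg_mem : ∀ e ∈ Residual ES c₁, g e ∈ Residual ES c₂)
    (hg_surj : ∀ y ∈ Residual ES c₂, ∃ e ∈ Residual ES c₁, g e = y)
    (hg_le : ∀ e ∈ Residual ES c₁, ∀ e' ∈ Residual ES c₁,
      (ES.le e e' ↔ ES.le (g e) (g e')))
    (hg_conf : ∀ e ∈ Residual ES c₁, ∀ e' ∈ Residual ES c₁,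
      (ES.conflict e e' ↔ ES.conflict (g e) (g e')))
    (c' : ES.Config) (hcc : c₁.1 ⊆ c'.1) :
    ES.IsConfig (c₂.1 ∪ (c'.1 \ c₁.1).image g) := by
  constructor
  · -- downward closed
    intro x hx y hy
    rw [Finset.mem_union] at hx ⊢
    rcases hx with hx | hx
    · exact Or.inl (c₂.2.1 x hx y hy)
    · rw [Finset.mem_image] at hx
      obtain ⟨e, he, rfl⟩ := hx
      rw [Finset.mem_sdiff] at he
      have heR : e ∈ Residual ES c₁ := mem_residual_sdiff c₁ c' hcc he.1 he.2
      by_cases hyc : y ∈ c₂.1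
      · exact Or.inl hyc
      · have hyR : y ∈ Residual ES c₂ := by
          refine ⟨hyc, fun a ha hconf => ?_⟩
          exact (hg_mem e heR).2 a ha (ES.conflict_le a y (g e) hconf hy)
        obtain ⟨e₀, he₀, rfl⟩ := hg_surj y hyR
        have : ES.le e₀ e := (hg_le e₀ he₀ e heR).mpr hy
        have he₀c : e₀ ∈ c'.1 := c'.2.1 e he.1 e₀ this
        refine Or.inr (Finset.mem_image_of_mem g ?_)
        rw [Finset.mem_sdiff]
        exact ⟨he₀c, he₀.1⟩
  · -- conflict-free
    intro x hx y hy hconf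
    rw [Finset.mem_union] at hx hy
    rcases hx with hx | hx <;> rcases hy with hy | hy
    · exact c₂.2.2 x hx y hy hconf
    · rw [Finset.mem_image] at hy
      obtain ⟨e, he, rfl⟩ := hy
      rw [Finset.mem_sdiff] at he
      exact (hg_mem e (mem_residual_sdiff c₁ c' hcc he.1 he.2)).2 x hx hconf
    · rw [Finset.mem_image] at hx
      obtain ⟨e, he, rfl⟩ := hx
      rw [Finset.mem_sdiff] at he
      exact (hg_mem e (mem_residual_sdiff c₁ c' hcc he.1 he.2)).2 y hy
        (ES.conflict_symm _ _ hconf)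
    · rw [Finset.mem_image] at hx hy
      obtain ⟨e, he, rfl⟩ := hx
      obtain ⟨e', he', rfl⟩ := hy
      rw [Finset.mem_sdiff] at he he'
      exact c'.2.2 e he.1 e' he'.1
        ((hg_conf e (mem_residual_sdiff c₁ c' hcc he.1 he.2)
          e' (mem_residual_sdiff c₁ c' hcc he'.1 he'.2)).mpr hconf)

lemma push_mem_iff {ES : EventStructure E} (c₁ c₂ : ES.Config) (g : E → E)
    (hg_mem : ∀ e ∈ Residual ES c₁, g e ∈ Residual ES c₂)
    (hg_inj : ∀ e ∈ Residual ES c₁, ∀ e' ∈ Residual ES c₁, g e = g e' → e = e')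
    (c' : ES.Config) (hcc : c₁.1 ⊆ c'.1)
    {e : E} (he : e ∈ Residual ES c₁) :
    g e ∈ c₂.1 ∪ (c'.1 \ c₁.1).image g ↔ e ∈ c'.1 := by
  rw [Finset.mem_union, Finset.mem_image]
  constructor
  · rintro (h | ⟨e₀, he₀, heq⟩)
    · exact absurd h (hg_mem e he).1
    · rw [Finset.mem_sdiff] at he₀
      rw [← hg_inj e₀ (mem_residual_sdiff c₁ c' hcc he₀.1 he₀.2) e he heq]
      exact he₀.1
  · intro h
    exact Or.inr ⟨e, Finset.mem_sdiff.mpr ⟨h, he.1⟩, rfl⟩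

variable {ES : EventStructure E} {ES' : EventStructure (E ⊕ ES.Config)}
  [DecidableEq (E ⊕ ES.Config)]

lemma nonHairy_isConfig
    (hle1 : ∀ e e', ES'.le (Sum.inl e) (Sum.inl e') ↔ ES.le e e')
    (hle3 : ∀ (c : ES.Config) (x : E ⊕ ES.Config), ES'.le (Sum.inr c) x ↔ x = Sum.inr c)
    (hc1 : ∀ e e', ES'.conflict (Sum.inl e) (Sum.inl e') ↔ ES.conflict e e')
    (c : ES.Config) : ES'.IsConfig (c.1.image Sum.inl) := by
  constructor
  · intro x hx y hy
    rw [Finset.mem_image] at hx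
    obtain ⟨e, he, rfl⟩ := hx
    cases y with
    | inl e' =>
      exact Finset.mem_image_of_mem _ (c.2.1 e he e' ((hle1 e' e).mp hy))
    | inr c'' =>
      exact absurd ((hle3 c'' _).mp hy) (by simp)
  · intro x hx y hy hconf
    rw [Finset.mem_image] at hx hy
    obtain ⟨e, he, rfl⟩ := hx
    obtain ⟨e', he', rfl⟩ := hy
    exact c.2.2 e he e' he' ((hc1 e e').mp hconf)

def nonHairy
    (hle1 : ∀ e e', ES'.le (Sum.inl e) (Sum.inl e') ↔ ES.le e e')
    (hle3 : ∀ (c : ES.Config) (x : E ⊕ ES.Config), ES'.le (Sum.inr c) x ↔ x = Sum.inr c)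
    (hc1 : ∀ e e', ES'.conflict (Sum.inl e) (Sum.inl e') ↔ ES.conflict e e')
    (c : ES.Config) : ES'.Config :=
  ⟨c.1.image Sum.inl, nonHairy_isConfig hle1 hle3 hc1 c⟩

lemma mem_residual_nonHairy_inl
    (hle1 : ∀ e e', ES'.le (Sum.inl e) (Sum.inl e') ↔ ES.le e e')
    (hle3 : ∀ (c : ES.Config) (x : E ⊕ ES.Config), ES'.le (Sum.inr c) x ↔ x = Sum.inr c)
    (hc1 : ∀ e e', ES'.conflict (Sum.inl e) (Sum.inl e') ↔ ES.conflict e e')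
    (c : ES.Config) (e : E) :
    Sum.inl e ∈ Residual ES' (nonHairy hle1 hle3 hc1 c) ↔ e ∈ Residual ES c := by
  simp only [Residual, Set.mem_setOf_eq, nonHairy, Finset.mem_image]
  constructor
  · rintro ⟨h1, h2⟩
    refine ⟨fun h => h1 ⟨e, h, rfl⟩, fun a ha hconf =>
      h2 (Sum.inl a) ⟨a, ha, rfl⟩ ((hc1 a e).mpr hconf)⟩
  · rintro ⟨h1, h2⟩
    constructor
    · rintro ⟨e', he', heq⟩
      rw [Sum.inl.injEq] at heq
      subst heq
      exact h1 he'
    · rintro y hy hconf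
      obtain ⟨a, ha, rfl⟩ := hy
      exact h2 a ha ((hc1 a e).mp hconf)

lemma mem_residual_nonHairy_inr
    (hle1 : ∀ e e', ES'.le (Sum.inl e) (Sum.inl e') ↔ ES.le e e')
    (hle3 : ∀ (c : ES.Config) (x : E ⊕ ES.Config), ES'.le (Sum.inr c) x ↔ x = Sum.inr c)
    (hc1 : ∀ e e', ES'.conflict (Sum.inl e) (Sum.inl e') ↔ ES.conflict e e')
    (hc2 : ∀ e (c : ES.Config), ES'.conflict (Sum.inl e) (Sum.inr c) ↔ e ∉ c.1)
    (c c' : ES.Config) :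
    Sum.inr c' ∈ Residual ES' (nonHairy hle1 hle3 hc1 c) ↔ c.1 ⊆ c'.1 := by
  simp only [Residual, Set.mem_setOf_eq, nonHairy, Finset.mem_image]
  constructor
  · rintro ⟨-, h2⟩ a ha
    by_contra hna
    exact h2 (Sum.inl a) ⟨a, ha, rfl⟩ ((hc2 a c').mpr hna)
  · intro hsub
    constructor
    · rintro ⟨e, he, heq⟩
      exact Sum.inl_ne_inr heq
    · rintro y hy hconf
      obtain ⟨a, ha, rfl⟩ := hy
      exact (hc2 a c').mp hconf (hsub ha)

lemma hairy_residual_empty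
    (hle2 : ∀ e (c : ES.Config), ES'.le (Sum.inl e) (Sum.inr c) ↔ e ∈ c.1)
    (hc2 : ∀ e (c : ES.Config), ES'.conflict (Sum.inl e) (Sum.inr c) ↔ e ∉ c.1)
    (hc3 : ∀ (c c' : ES.Config), ES'.conflict (Sum.inr c) (Sum.inr c') ↔ c ≠ c')
    (d : ES'.Config) (c : ES.Config)
    (hcd : Sum.inr c ∈ d.1) : Residual ES' d = ∅ := by
  ext x
  simp only [Set.mem_empty_iff_false, iff_false]
  rintro ⟨h1, h2⟩
  cases x with
  | inl e =>
    by_cases hec : e ∈ c.1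
    · exact h1 (d.2.1 _ hcd (Sum.inl e) ((hle2 e c).mpr hec))
    · exact h2 (Sum.inr c) hcd (ES'.conflict_symm _ _ ((hc2 e c).mpr hec))
  | inr c' =>
    by_cases hcc : c' = c
    · subst hcc; exact h1 hcd
    · exact h2 (Sum.inr c) hcd ((hc3 c c').mpr fun h => hcc h.symm)

def hairyRep
    (hle2 : ∀ e (c : ES.Config), ES'.le (Sum.inl e) (Sum.inr c) ↔ e ∈ c.1)
    (hle3 : ∀ (c : ES.Config) (x : E ⊕ ES.Config), ES'.le (Sum.inr c) x ↔ x = Sum.inr c) :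
    ES'.Config :=
  ⟨{Sum.inr ES.emptyConfig}, by
    constructor
    · intro x hx y hy
      rw [Finset.mem_singleton] at hx
      subst hx
      rw [Finset.mem_singleton]
      cases y with
      | inl e => exact absurd ((hle2 e _).mp hy) (Finset.notMem_empty e)
      | inr c =>
        have h := (hle3 c _).mp hy
        rw [← h]
    · intro x hx y hy hconf
      rw [Finset.mem_singleton] at hx hy
      subst hx; subst hy
      exact ES'.conflict_irrefl _ hconf⟩

lemma pull_push_eq {ES : EventStructure E} (c₁ c₂ : ES.Config) (g g' : E → E)
    (hg_mem : ∀ e ∈ Residual ES c₁, g e ∈ Residual ES c₂)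
    (hgg' : ∀ e ∈ Residual ES c₁, g' (g e) = e)
    (c' : ES.Config) (hcc : c₁.1 ⊆ c'.1) :
    c₁.1 ∪ ((c₂.1 ∪ (c'.1 \ c₁.1).image g) \ c₂.1).image g' = c'.1 := by
  ext x
  simp only [Finset.mem_union, Finset.mem_image, Finset.mem_sdiff]
  constructor
  · rintro (hx | ⟨y, ⟨hy1 | ⟨e, he, rfl⟩, hy2⟩, rfl⟩)
    · exact hcc hx
    · exact absurd hy1 hy2
    · rw [hgg' e (mem_residual_sdiff c₁ c' hcc he.1 he.2)]
      exact he.1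
  · intro hx
    by_cases hx1 : x ∈ c₁.1
    · exact Or.inl hx1
    · have hxR := mem_residual_sdiff c₁ c' hcc hx hx1
      exact Or.inr ⟨g x, ⟨Or.inr ⟨x, ⟨hx, hx1⟩, rfl⟩, (hg_mem x hxR).1⟩, hgg' x hxR⟩

lemma hairing_residual_iso {A : Type*} (lab : E → A)
    (hle1 : ∀ e e', ES'.le (Sum.inl e) (Sum.inl e') ↔ ES.le e e')
    (hle2 : ∀ e (c : ES.Config), ES'.le (Sum.inl e) (Sum.inr c) ↔ e ∈ c.1)
    (hle3 : ∀ (c : ES.Config) (x : E ⊕ ES.Config), ES'.le (Sum.inr c) x ↔ x = Sum.inr c)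
    (hc1 : ∀ e e', ES'.conflict (Sum.inl e) (Sum.inl e') ↔ ES.conflict e e')
    (hc2 : ∀ e (c : ES.Config), ES'.conflict (Sum.inl e) (Sum.inr c) ↔ e ∉ c.1)
    (hc3 : ∀ (c c' : ES.Config), ES'.conflict (Sum.inr c) (Sum.inr c') ↔ c ≠ c')
    (c₁ c₂ : ES.Config)
    (h : ResidualIso ES lab c₁ c₂) :
    ResidualIso ES' (Sum.elim (fun e => some (lab e)) (fun _ => (none : Option A)))
      (nonHairy hle1 hle3 hc1 c₁) (nonHairy hle1 hle3 hc1 c₂) := by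
  classical
  obtain ⟨f, hfle, hfconf, hflab⟩ := h
  set g : E → E := fun e => if h : e ∈ Residual ES c₁ then (f ⟨e, h⟩).1 else e with hg_def
  set g' : E → E := fun e => if h : e ∈ Residual ES c₂ then (f.symm ⟨e, h⟩).1 else e
    with hg'_def
  have hg_eq : ∀ e (he : e ∈ Residual ES c₁), g e = (f ⟨e, he⟩).1 := by
    intro e he; rw [hg_def]; exact dif_pos he
  have hg'_eq : ∀ e (he : e ∈ Residual ES c₂), g' e = (f.symm ⟨e, he⟩).1 := by
    intro e he; rw [hg'_def]; exact dif_pos he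
  have hg_mem : ∀ e ∈ Residual ES c₁, g e ∈ Residual ES c₂ := by
    intro e he; rw [hg_eq e he]; exact (f ⟨e, he⟩).2
  have hg'_mem : ∀ e ∈ Residual ES c₂, g' e ∈ Residual ES c₁ := by
    intro e he; rw [hg'_eq e he]; exact (f.symm ⟨e, he⟩).2
  have hgg' : ∀ e ∈ Residual ES c₁, g' (g e) = e := by
    intro e he
    rw [hg_eq e he, hg'_eq _ (f ⟨e, he⟩).2]
    exact congrArg Subtype.val (f.symm_apply_apply ⟨e, he⟩)
  have hg'g : ∀ e ∈ Residual ES c₂, g (g' e) = e := by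
    intro e he
    rw [hg'_eq e he, hg_eq _ (f.symm ⟨e, he⟩).2]
    exact congrArg Subtype.val (f.apply_symm_apply ⟨e, he⟩)
  have hg_inj : ∀ e ∈ Residual ES c₁, ∀ e' ∈ Residual ES c₁, g e = g e' → e = e' := by
    intro e he e' he' hq
    have h2 : g' (g e) = g' (g e') := by rw [hq]
    rwa [hgg' e he, hgg' e' he'] at h2
  have hg_surj : ∀ y ∈ Residual ES c₂, ∃ e ∈ Residual ES c₁, g e = y :=
    fun y hy => ⟨g' y, hg'_mem y hy, hg'g y hy⟩
  have hg'_surj : ∀ y ∈ Residual ES c₁, ∃ e ∈ Residual ES c₂, g' e = y :=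
    fun y hy => ⟨g y, hg_mem y hy, hgg' y hy⟩
  have hg_le : ∀ e ∈ Residual ES c₁, ∀ e' ∈ Residual ES c₁,
      (ES.le e e' ↔ ES.le (g e) (g e')) := by
    intro e he e' he'
    rw [hg_eq e he, hg_eq e' he']
    exact hfle ⟨e, he⟩ ⟨e', he'⟩
  have hg_conf : ∀ e ∈ Residual ES c₁, ∀ e' ∈ Residual ES c₁,
      (ES.conflict e e' ↔ ES.conflict (g e) (g e')) := by
    intro e he e' he'
    rw [hg_eq e he, hg_eq e' he']
    exact hfconf ⟨e, he⟩ ⟨e', he'⟩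
  have hg_lab : ∀ e ∈ Residual ES c₁, lab (g e) = lab e := by
    intro e he; rw [hg_eq e he]; exact hflab ⟨e, he⟩
  have hg'_le : ∀ e ∈ Residual ES c₂, ∀ e' ∈ Residual ES c₂,
      (ES.le e e' ↔ ES.le (g' e) (g' e')) := by
    intro e he e' he'
    have h2 := hg_le (g' e) (hg'_mem e he) (g' e') (hg'_mem e' he')
    rw [hg'g e he, hg'g e' he'] at h2
    exact h2.symm
  have hg'_conf : ∀ e ∈ Residual ES c₂, ∀ e' ∈ Residual ES c₂,
      (ES.conflict e e' ↔ ES.conflict (g' e) (g' e')) := by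
    intro e he e' he'
    have h2 := hg_conf (g' e) (hg'_mem e he) (g' e') (hg'_mem e' he')
    rw [hg'g e he, hg'g e' he'] at h2
    exact h2.symm
  set pushC : ES.Config → ES.Config := fun c' =>
    if hcc : c₁.1 ⊆ c'.1 then
      ⟨c₂.1 ∪ (c'.1 \ c₁.1).image g,
        push_isConfig c₁ c₂ g hg_mem hg_surj hg_le hg_conf c' hcc⟩
    else c' with hpush_def
  set pullC : ES.Config → ES.Config := fun c' =>
    if hcc : c₂.1 ⊆ c'.1 then
      ⟨c₁.1 ∪ (c'.1 \ c₂.1).image g',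
        push_isConfig c₂ c₁ g' hg'_mem hg'_surj hg'_le hg'_conf c' hcc⟩
    else c' with hpull_def
  have hpushC_eq : ∀ (c' : ES.Config) (hcc : c₁.1 ⊆ c'.1),
      (pushC c').1 = c₂.1 ∪ (c'.1 \ c₁.1).image g := by
    intro c' hcc
    rw [hpush_def]
    simp only [dif_pos hcc]
  have hpullC_eq : ∀ (c' : ES.Config) (hcc : c₂.1 ⊆ c'.1),
      (pullC c').1 = c₁.1 ∪ (c'.1 \ c₂.1).image g' := by
    intro c' hcc
    rw [hpull_def]
    simp only [dif_pos hcc]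
  have hsub_push : ∀ (c' : ES.Config) (hcc : c₁.1 ⊆ c'.1), c₂.1 ⊆ (pushC c').1 := by
    intro c' hcc
    rw [hpushC_eq c' hcc]
    exact Finset.subset_union_left
  have hsub_pull : ∀ (c' : ES.Config) (hcc : c₂.1 ⊆ c'.1), c₁.1 ⊆ (pullC c').1 := by
    intro c' hcc
    rw [hpullC_eq c' hcc]
    exact Finset.subset_union_left
  have hpullpush : ∀ (c' : ES.Config) (hcc : c₁.1 ⊆ c'.1), pullC (pushC c') = c' := by
    intro c' hcc
    apply Subtype.ext
    rw [hpullC_eq _ (hsub_push c' hcc), hpushC_eq c' hcc]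
    exact pull_push_eq c₁ c₂ g g' hg_mem hgg' c' hcc
  have hpushpull : ∀ (c' : ES.Config) (hcc : c₂.1 ⊆ c'.1), pushC (pullC c') = c' := by
    intro c' hcc
    apply Subtype.ext
    rw [hpushC_eq _ (hsub_pull c' hcc), hpullC_eq c' hcc]
    exact pull_push_eq c₂ c₁ g' g hg'_mem hg'g c' hcc
  have hmem_push : ∀ (c' : ES.Config) (hcc : c₁.1 ⊆ c'.1) (e : E),
      e ∈ Residual ES c₁ → (g e ∈ (pushC c').1 ↔ e ∈ c'.1) := by
    intro c' hcc e he
    rw [hpushC_eq c' hcc]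
    exact push_mem_iff c₁ c₂ g hg_mem hg_inj c' hcc he
  have hpush_inj : ∀ (c' c'' : ES.Config), c₁.1 ⊆ c'.1 → c₁.1 ⊆ c''.1 →
      pushC c' = pushC c'' → c' = c'' := by
    intro c' c'' h' h'' hq
    rw [← hpullpush c' h', hq, hpullpush c'' h'']
  refine ⟨⟨fun x => ⟨Sum.map g pushC x.1, ?_⟩, fun x => ⟨Sum.map g' pullC x.1, ?_⟩,
    ?_, ?_⟩, ?_, ?_, ?_⟩
  · -- toFun membership
    obtain ⟨x, hx⟩ := x
    cases x with
    | inl e =>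
      exact (mem_residual_nonHairy_inl hle1 hle3 hc1 c₂ (g e)).mpr
        (hg_mem e ((mem_residual_nonHairy_inl hle1 hle3 hc1 c₁ e).mp hx))
    | inr c' =>
      exact (mem_residual_nonHairy_inr hle1 hle3 hc1 hc2 c₂ (pushC c')).mpr
        (hsub_push c' ((mem_residual_nonHairy_inr hle1 hle3 hc1 hc2 c₁ c').mp hx))
  · -- invFun membership
    obtain ⟨x, hx⟩ := x
    cases x with
    | inl e =>
      exact (mem_residual_nonHairy_inl hle1 hle3 hc1 c₁ (g' e)).mpr
        (hg'_mem e ((mem_residual_nonHairy_inl hle1 hle3 hc1 c₂ e).mp hx))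
    | inr c' =>
      exact (mem_residual_nonHairy_inr hle1 hle3 hc1 hc2 c₁ (pullC c')).mpr
        (hsub_pull c' ((mem_residual_nonHairy_inr hle1 hle3 hc1 hc2 c₂ c').mp hx))
  · -- left inverse
    rintro ⟨x, hx⟩
    apply Subtype.ext
    cases x with
    | inl e =>
      simp only [Sum.map_inl]
      exact congrArg Sum.inl (hgg' e ((mem_residual_nonHairy_inl hle1 hle3 hc1 c₁ e).mp hx))
    | inr c' =>
      simp only [Sum.map_inr]
      exact congrArg Sum.inr
        (hpullpush c' ((mem_residual_nonHairy_inr hle1 hle3 hc1 hc2 c₁ c').mp hx))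
  · -- right inverse
    rintro ⟨x, hx⟩
    apply Subtype.ext
    cases x with
    | inl e =>
      simp only [Sum.map_inl]
      exact congrArg Sum.inl (hg'g e ((mem_residual_nonHairy_inl hle1 hle3 hc1 c₂ e).mp hx))
    | inr c' =>
      simp only [Sum.map_inr]
      exact congrArg Sum.inr
        (hpushpull c' ((mem_residual_nonHairy_inr hle1 hle3 hc1 hc2 c₂ c').mp hx))
  · -- le preserved
    rintro ⟨x, hx⟩ ⟨y, hy⟩
    simp only [Equiv.coe_fn_mk]
    cases x with
    | inl e =>
      cases y with
      | inl e' =>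
        simp only [Sum.map_inl]
        rw [hle1, hle1]
        exact hg_le e ((mem_residual_nonHairy_inl hle1 hle3 hc1 c₁ e).mp hx)
          e' ((mem_residual_nonHairy_inl hle1 hle3 hc1 c₁ e').mp hy)
      | inr c' =>
        simp only [Sum.map_inl, Sum.map_inr]
        rw [hle2, hle2]
        exact (hmem_push c' ((mem_residual_nonHairy_inr hle1 hle3 hc1 hc2 c₁ c').mp hy)
          e ((mem_residual_nonHairy_inl hle1 hle3 hc1 c₁ e).mp hx)).symm
    | inr c' =>
      cases y with
      | inl e =>
        simp only [Sum.map_inl, Sum.map_inr]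
        rw [hle3, hle3]
        simp
      | inr c'' =>
        simp only [Sum.map_inr]
        rw [hle3, hle3, Sum.inr.injEq, Sum.inr.injEq]
        constructor
        · rintro rfl; rfl
        · intro hq
          exact hpush_inj c'' c'
            ((mem_residual_nonHairy_inr hle1 hle3 hc1 hc2 c₁ c'').mp hy)
            ((mem_residual_nonHairy_inr hle1 hle3 hc1 hc2 c₁ c').mp hx) hq
  · -- conflict preserved
    have hcsymm : ∀ x y, ES'.conflict x y ↔ ES'.conflict y x :=
      fun x y => ⟨ES'.conflict_symm x y, ES'.conflict_symm y x⟩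
    rintro ⟨x, hx⟩ ⟨y, hy⟩
    simp only [Equiv.coe_fn_mk]
    cases x with
    | inl e =>
      cases y with
      | inl e' =>
        simp only [Sum.map_inl]
        rw [hc1, hc1]
        exact hg_conf e ((mem_residual_nonHairy_inl hle1 hle3 hc1 c₁ e).mp hx)
          e' ((mem_residual_nonHairy_inl hle1 hle3 hc1 c₁ e').mp hy)
      | inr c' =>
        simp only [Sum.map_inl, Sum.map_inr]
        rw [hc2, hc2]
        exact not_congr (hmem_push c'
          ((mem_residual_nonHairy_inr hle1 hle3 hc1 hc2 c₁ c').mp hy)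
          e ((mem_residual_nonHairy_inl hle1 hle3 hc1 c₁ e).mp hx)).symm
    | inr c' =>
      cases y with
      | inl e =>
        simp only [Sum.map_inl, Sum.map_inr]
        rw [hcsymm, hc2, hcsymm (Sum.inr (pushC c')), hc2]
        exact not_congr (hmem_push c'
          ((mem_residual_nonHairy_inr hle1 hle3 hc1 hc2 c₁ c').mp hx)
          e ((mem_residual_nonHairy_inl hle1 hle3 hc1 c₁ e).mp hy)).symm
      | inr c'' =>
        simp only [Sum.map_inr]
        rw [hc3, hc3]
        constructor
        · intro hne hq
          exact hne (hpush_inj c' c''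
            ((mem_residual_nonHairy_inr hle1 hle3 hc1 hc2 c₁ c').mp hx)
            ((mem_residual_nonHairy_inr hle1 hle3 hc1 hc2 c₁ c'').mp hy) hq)
        · intro hne hq
          exact hne (congrArg pushC hq)
  · -- labels preserved
    rintro ⟨x, hx⟩
    simp only [Equiv.coe_fn_mk]
    cases x with
    | inl e =>
      simp only [Sum.map_inl, Sum.elim_inl, Option.some.injEq]
      exact hg_lab e ((mem_residual_nonHairy_inl hle1 hle3 hc1 c₁ e).mp hx)
    | inr c' =>
      simp only [Sum.map_inr, Sum.elim_inr]

end Stmt19Aux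


/-- The hairing `Ė` of a regular `M`-labeled (trace-regular)
event structure `E`, with hair events labeled by a fresh letter `h` (here
`none : Option A`), is a regular `Ṁ`-labeled event structure over
`Ṁ = (Σ ∪ {h}, I)`; in particular the hairing of a trace-regular event
structure is trace-regular. -/
theorem stmt19 {E A : Type*} [Fintype A] [Nonempty A]
    (ES : EventStructure E) (I : A → A → Prop)
    (hI_irrefl : ∀ a, ¬ I a a) (hI_symm : ∀ a b, I a b → I b a)
    (lab : E → A) (hlab : IsTraceLabeling ES I lab)
    (hreg : RegularLabeled ES lab)
    -- `ES'` is the hairing `Ė` of `ES`: events of `E` plus one hair event per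
    -- configuration of `E`.
    (ES' : EventStructure (E ⊕ ES.Config))
    (hle1 : ∀ e e', ES'.le (Sum.inl e) (Sum.inl e') ↔ ES.le e e')
    (hle2 : ∀ e (c : ES.Config), ES'.le (Sum.inl e) (Sum.inr c) ↔ e ∈ c.1)
    (hle3 : ∀ (c : ES.Config) (x : E ⊕ ES.Config),
      ES'.le (Sum.inr c) x ↔ x = Sum.inr c)
    (hc1 : ∀ e e', ES'.conflict (Sum.inl e) (Sum.inl e') ↔ ES.conflict e e')
    (hc2 : ∀ e (c : ES.Config), ES'.conflict (Sum.inl e) (Sum.inr c) ↔ e ∉ c.1)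
    (hc3 : ∀ (c c' : ES.Config), ES'.conflict (Sum.inr c) (Sum.inr c') ↔ c ≠ c') :
    IsTraceLabeling ES'
        (fun x y : Option A => ∃ a b, x = some a ∧ y = some b ∧ I a b)
        (Sum.elim (fun e => some (lab e)) (fun _ => (none : Option A))) ∧
    RegularLabeled ES'
        (Sum.elim (fun e => some (lab e)) (fun _ => (none : Option A))) := by
  classical
  constructor
  · constructor
    · -- les1
      rintro x y ⟨hconf, hmin⟩
      cases x with
      | inl e =>
        cases y with
        | inl e' =>
          simp only [Sum.elim_inl, ne_eq, Option.some.injEq]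
          refine hlab.les1 e e' ⟨(hc1 e e').mp hconf, ?_⟩
          rintro ⟨e'', h1, h2, h3⟩
          refine hmin ⟨Sum.inl e'', ?_, ?_, ?_⟩
          · simp only [ne_eq, Sum.inl.injEq]; exact h1
          · simp only [ne_eq, Sum.inl.injEq]; exact h2
          · rcases h3 with ⟨hl, hc⟩ | ⟨hl, hc⟩
            · exact Or.inl ⟨(hle1 _ _).mpr hl, (hc1 _ _).mpr hc⟩
            · exact Or.inr ⟨(hle1 _ _).mpr hl, (hc1 _ _).mpr hc⟩
        | inr c => simp
      | inr c =>
        cases y with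
        | inl e => simp
        | inr c' =>
          exfalso
          have hne : c ≠ c' := (hc3 c c').mp hconf
          by_cases hsub : c.1 ⊆ c'.1
          · have hss : c.1 ⊂ c'.1 :=
              Finset.ssubset_iff_subset_ne.mpr ⟨hsub, fun h => hne (Subtype.ext h)⟩
            obtain ⟨e, hec', hec⟩ := Finset.exists_of_ssubset hss
            refine hmin ⟨Sum.inl e, by simp, by simp,
              Or.inr ⟨(hle2 e c').mpr hec', (hc2 e c).mpr hec⟩⟩
          · obtain ⟨e, hec, hec'⟩ := Finset.not_subset.mp hsub
            refine hmin ⟨Sum.inl e, by simp, by simp,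
              Or.inl ⟨(hle2 e c).mpr hec, (hc2 e c').mpr hec'⟩⟩
    · -- les2
      rintro x y h ⟨a, b, ha, hb, hIab⟩
      cases x with
      | inl e =>
        cases y with
        | inl e' =>
          simp only [Sum.elim_inl, Option.some.injEq] at ha hb
          subst ha; subst hb
          refine hlab.les2 e e' ?_ hIab
          rcases h with himm | hmc
          · refine Or.inl ⟨(hle1 e e').mp himm.1, fun hq => himm.2.1 (by rw [hq]), ?_⟩
            intro e'' hl1 hl2
            rcases himm.2.2 (Sum.inl e'') ((hle1 _ _).mpr hl1) ((hle1 _ _).mpr hl2) with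
              hh | hh
            · exact Or.inl (Sum.inl_injective hh)
            · exact Or.inr (Sum.inl_injective hh)
          · refine Or.inr ⟨(hc1 e e').mp hmc.1, ?_⟩
            rintro ⟨e'', h1, h2, h3⟩
            refine hmc.2 ⟨Sum.inl e'', ?_, ?_, ?_⟩
            · simp only [ne_eq, Sum.inl.injEq]; exact h1
            · simp only [ne_eq, Sum.inl.injEq]; exact h2
            · rcases h3 with ⟨hl, hc⟩ | ⟨hl, hc⟩
              · exact Or.inl ⟨(hle1 _ _).mpr hl, (hc1 _ _).mpr hc⟩
              · exact Or.inr ⟨(hle1 _ _).mpr hl, (hc1 _ _).mpr hc⟩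
        | inr c => simp at hb
      | inr c => simp at ha
    · -- les3
      intro x y hnI
      cases x with
      | inl e =>
        cases y with
        | inl e' =>
          have hni : ¬ I (lab e) (lab e') := fun hI => hnI ⟨lab e, lab e', rfl, rfl, hI⟩
          rcases hlab.les3 e e' hni with h | h | h
          · exact Or.inl ((hle1 e e').mpr h)
          · exact Or.inr (Or.inl ((hle1 e' e).mpr h))
          · exact Or.inr (Or.inr ((hc1 e e').mpr h))
        | inr c =>
          by_cases hec : e ∈ c.1
          · exact Or.inl ((hle2 e c).mpr hec)
          · exact Or.inr (Or.inr ((hc2 e c).mpr hec))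
      | inr c =>
        cases y with
        | inl e =>
          by_cases hec : e ∈ c.1
          · exact Or.inr (Or.inl ((hle2 e c).mpr hec))
          · exact Or.inr (Or.inr (ES'.conflict_symm _ _ ((hc2 e c).mpr hec)))
        | inr c' =>
          by_cases hcc : c = c'
          · subst hcc; exact Or.inl (ES'.le_refl _)
          · exact Or.inr (Or.inr ((hc3 c c').mpr hcc))
  · -- regularity
    obtain ⟨s, hsfin, hs⟩ := hreg
    refine ⟨(fun c => Stmt19Aux.nonHairy hle1 hle3 hc1 c) '' s ∪
      {Stmt19Aux.hairyRep hle2 hle3},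
      (hsfin.image _).union (Set.finite_singleton _), ?_⟩
    intro d
    by_cases hhair : ∃ c : ES.Config, Sum.inr c ∈ d.1
    · obtain ⟨c, hc⟩ := hhair
      refine ⟨Stmt19Aux.hairyRep hle2 hle3, Or.inr rfl, ?_⟩
      have h1 : Residual ES' d = ∅ := Stmt19Aux.hairy_residual_empty hle2 hc2 hc3 d c hc
      have h2 : Residual ES' (Stmt19Aux.hairyRep hle2 hle3) = ∅ :=
        Stmt19Aux.hairy_residual_empty hle2 hc2 hc3 _ ES.emptyConfig
          (Finset.mem_singleton_self _)
      haveI i1 : IsEmpty (Residual ES' d) := Set.isEmpty_coe_sort.mpr h1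
      haveI i2 : IsEmpty ↥(Residual ES' (Stmt19Aux.hairyRep hle2 hle3)) :=
        Set.isEmpty_coe_sort.mpr h2
      exact ⟨Equiv.equivOfIsEmpty _ _, fun x _ => isEmptyElim x, fun x _ => isEmptyElim x,
        fun x => isEmptyElim x⟩
    · push_neg at hhair
      have hconf₀ : ES.IsConfig (d.1.preimage Sum.inl Sum.inl_injective.injOn) := by
        constructor
        · intro e he e' hl
          rw [Finset.mem_preimage] at he ⊢
          exact d.2.1 _ he _ ((hle1 e' e).mpr hl)
        · intro e he e' he' hcf
          rw [Finset.mem_preimage] at he he'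
          exact d.2.2 _ he _ he' ((hc1 e e').mpr hcf)
      have hd : d = Stmt19Aux.nonHairy hle1 hle3 hc1 ⟨_, hconf₀⟩ := by
        apply Subtype.ext
        ext x
        show x ∈ d.1 ↔ x ∈ Finset.image Sum.inl (d.1.preimage Sum.inl Sum.inl_injective.injOn)
        cases x with
        | inl e => simp [Finset.mem_preimage]
        | inr c =>
          simp only [Finset.mem_image, Finset.mem_preimage]
          constructor
          · intro h; exact absurd h (hhair c)
          · rintro ⟨e, he, heq⟩; exact absurd heq (by simp)
      obtain ⟨c', hc's, hiso⟩ := hs ⟨_, hconf₀⟩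
      refine ⟨Stmt19Aux.nonHairy hle1 hle3 hc1 c', Or.inl ⟨c', hc's, rfl⟩, ?_⟩
      rw [hd]
      exact Stmt19Aux.hairing_residual_iso lab hle1 hle2 hle3 hc1 hc2 hc3 _ c' hiso
end
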